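/- arXiv:1609.06243 — 8 statements merged into one kernel-verified Lean document; each statement's English description precedes it below -/
import Mathlib

section
/- Let V be a complex linear subspace of ℂⁿ (realized as Fin n → ℂ) with dim_ℂ V = k. Suppose that for every t : Fin n → ℂ with |t i| = 1 for all i, the diagonal linear map v ↦ (fun i => t i * v i) maps V into V. Then there exists a k-element subset S of Fin n such that V is the span of the standard basis vectors {e_i : i ∈ S}. -/
set_option maxHeartbeats 1000000 in


/-- A complex `k`-dimensional subspace of `ℂⁿ` invariant under all
unit-modulus diagonal transformations is the span of `k` standard basis vectors. -/
theorem torus_fixed_points_complex_grassmannian (n k : ℕ)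
    (V : Submodule ℂ (Fin n → ℂ))
    (hdim : Module.finrank ℂ V = k)
    (hinv : ∀ t : Fin n → ℂ, (∀ i, ‖t i‖ = 1) →
      ∀ v ∈ V, (fun i => t i * v i) ∈ V) :
    ∃ S : Finset (Fin n), S.card = k ∧
      V = Submodule.span ℂ ((fun i => Pi.single i (1 : ℂ)) '' (S : Set (Fin n))) := by
  classical
  -- each coordinate projection of an element of V stays in V
  have hsingle : ∀ v ∈ V, ∀ i : Fin n, (Pi.single i (v i) : Fin n → ℂ) ∈ V := by
    intro v hv i
    set t : Fin n → ℂ := fun j => if j = i then -1 else 1 with ht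
    have habs : ∀ j, ‖t j‖ = 1 := by
      intro j; by_cases h : j = i <;> simp [ht, h]
    have htv : (fun j => t j * v j) ∈ V := hinv t habs v hv
    have heq : (Pi.single i (v i) : Fin n → ℂ)
        = (2⁻¹ : ℂ) • (v - fun j => t j * v j) := by
      funext j
      by_cases h : j = i
      · subst h; simp [ht]; ring
      · simp [ht, h, Pi.single_eq_of_ne h]
    rw [heq]
    exact V.smul_mem _ (V.sub_mem hv htv)
  set S : Finset (Fin n) := Finset.univ.filter (fun i => ∃ v ∈ V, v i ≠ 0) with hS
  have hbasis : ∀ i ∈ S, (Pi.single i (1 : ℂ) : Fin n → ℂ) ∈ V := by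
    intro i hi
    simp only [hS, Finset.mem_filter] at hi
    obtain ⟨-, v, hv, hvi⟩ := hi
    have := V.smul_mem (v i)⁻¹ (hsingle v hv i)
    have heq : (v i)⁻¹ • (Pi.single i (v i) : Fin n → ℂ) = Pi.single i (1 : ℂ) := by
      funext j
      by_cases h : j = i
      · subst h; simp [inv_mul_cancel₀ hvi]
      · simp [Pi.single_eq_of_ne h]
    rwa [heq] at this
  have hVeq : V = Submodule.span ℂ ((fun i => Pi.single i (1 : ℂ)) '' (S : Set (Fin n))) := by
    apply le_antisymm
    · intro v hv
      have hrep : v = ∑ i ∈ S, v i • (Pi.single i (1 : ℂ) : Fin n → ℂ) := by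
        funext j
        rw [Finset.sum_apply]
        by_cases hj : j ∈ S
        · rw [Finset.sum_eq_single j]
          · simp
          · intro i _ hij
            simp [Pi.single_eq_of_ne (Ne.symm hij)]
          · intro h; exact absurd hj h
        · have hvj : v j = 0 := by
            by_contra h
            exact hj (by simp [hS]; exact ⟨v, hv, h⟩)
          rw [hvj]
          symm
          apply Finset.sum_eq_zero
          intro i hi
          have : i ≠ j := fun h => hj (h ▸ hi)
          simp [Pi.single_eq_of_ne this.symm]
      rw [hrep]
      apply Submodule.sum_mem
      intro i hi
      exact Submodule.smul_mem _ _ (Submodule.subset_span ⟨i, by simpa using hi, rfl⟩)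
    · rw [Submodule.span_le]
      rintro _ ⟨i, hi, rfl⟩
      exact hbasis i (by simpa using hi)
  refine ⟨S, ?_, hVeq⟩
  -- cardinality
  have hinj : Set.InjOn (fun i => (Pi.single i (1 : ℂ) : Fin n → ℂ)) (S : Set (Fin n)) := by
    intro a _ b _ hab
    by_contra h
    have := congrFun hab a
    simp only at this
    rw [Pi.single_eq_same, Pi.single_eq_of_ne h] at this
    exact one_ne_zero this
  have hli : LinearIndependent ℂ (fun i : (S : Set (Fin n)) =>
      (Pi.single (i : Fin n) (1 : ℂ) : Fin n → ℂ)) := by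
    have := (Pi.basisFun ℂ (Fin n)).linearIndependent
    have h2 := this.comp (fun i : (S : Set (Fin n)) => (i : Fin n)) Subtype.val_injective
    simpa [Function.comp_def, Pi.basisFun_apply] using h2
  have hli2 : LinearIndependent ℂ
      (fun x : ((fun i => (Pi.single i (1 : ℂ) : Fin n → ℂ)) '' (S : Set (Fin n))) =>
        (x : Fin n → ℂ)) :=
      LinearIndepOn.id_image (v := fun i => (Pi.single i (1 : ℂ) : Fin n → ℂ)) (s := (S : Set (Fin n))) hli
  have hcard : Module.finrank ℂ V = S.card := by
    haveI : Fintype ((fun i => (Pi.single i (1:ℂ) : Fin n → ℂ)) '' (S : Set (Fin n))) :=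
      (S.finite_toSet.image _).fintype
    rw [hVeq, finrank_span_set_eq_card hli2, ← Set.ncard_eq_toFinset_card',
      Set.ncard_image_of_injOn hinj, Set.ncard_coe_finset]
  rw [← hcard, hdim]
end

section
/- Let ℝ^{2n} be realized as Fin n → ℝ², and for θ : Fin n → ℝ let ρ_θ be the linear map that rotates the i-th ℝ²-factor by angle θ i, i.e. ρ_θ(v) i = (cos(θ i)·(v i).1 − sin(θ i)·(v i).2, sin(θ i)·(v i).1 + cos(θ i)·(v i).2). Let V be a linear subspace of Fin n → ℝ² with dim_ℝ V = 2k such that ρ_θ maps V into V for every θ : Fin n → ℝ. Then there exists a k-element subset S of Fin n such that V = {v : Fin n → ℝ² | v j = 0 for all j ∉ S}, i.e. V is the direct sum of the coordinate planes indexed by S. -/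
/-- A real `2k`-dimensional subspace of `ℝ^{2n} = Fin n → ℝ²` invariant under
all blockwise rotations is a direct sum of `k` of the coordinate planes. -/
theorem torus_fixed_points_real_grassmannian_even (n k : ℕ)
    (V : Submodule ℝ (Fin n → ℝ × ℝ))
    (hdim : Module.finrank ℝ V = 2 * k)
    (hinv : ∀ θ : Fin n → ℝ, ∀ v ∈ V,
      (fun i => (Real.cos (θ i) * (v i).1 - Real.sin (θ i) * (v i).2,
                 Real.sin (θ i) * (v i).1 + Real.cos (θ i) * (v i).2)) ∈ V) :
    ∃ S : Finset (Fin n), S.card = k ∧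
      ∀ v : Fin n → ℝ × ℝ, v ∈ V ↔ ∀ j ∉ S, v j = 0 := by
  classical
  -- rotation at a single coordinate stays in V
  have rot_mem : ∀ (i : Fin n) (θ₀ : ℝ), ∀ v ∈ V,
      (Function.update v i (Real.cos θ₀ * (v i).1 - Real.sin θ₀ * (v i).2,
        Real.sin θ₀ * (v i).1 + Real.cos θ₀ * (v i).2)) ∈ V := by
    intro i θ₀ v hv
    have h := hinv (fun j => if j = i then θ₀ else 0) v hv
    convert h using 1
    funext j
    by_cases hj : j = i
    · subst hj; simp [Function.update]
    · simp [Function.update, hj]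
  -- the single-coordinate component of an element of V is in V
  have single_mem : ∀ v ∈ V, ∀ i, Pi.single i (v i) ∈ V := by
    intro v hv i
    have h := rot_mem i Real.pi v hv
    have key : Pi.single i (v i) = (2⁻¹ : ℝ) •
        (v - Function.update v i (Real.cos Real.pi * (v i).1 - Real.sin Real.pi * (v i).2,
          Real.sin Real.pi * (v i).1 + Real.cos Real.pi * (v i).2)) := by
      funext j
      by_cases hj : j = i
      · subst hj
        simp only [Pi.single_eq_same, Pi.smul_apply, Pi.sub_apply, Function.update_self,
          Real.cos_pi, Real.sin_pi]
        apply Prod.ext <;> simp <;> ring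
      · simp [Function.update, hj, Pi.single_eq_of_ne hj]
    rw [key]
    exact V.smul_mem _ (V.sub_mem hv h)
  -- if some nonzero vector sits in V at coordinate i, then the whole plane does
  have full : ∀ (i : Fin n) (x : ℝ × ℝ), x ≠ 0 → Pi.single i x ∈ V →
      ∀ y : ℝ × ℝ, Pi.single i y ∈ V := by
    intro i x hx hxV y
    have hrot : Pi.single i ((-x.2, x.1) : ℝ × ℝ) ∈ V := by
      have h := rot_mem i (Real.pi / 2) (Pi.single i x) hxV
      convert h using 1
      funext j
      by_cases hj : j = i
      · subst hj; simp
      · simp [Function.update, hj, Pi.single_eq_of_ne hj]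
    set d : ℝ := x.1 ^ 2 + x.2 ^ 2 with hd_def
    have hd : d ≠ 0 := by
      intro h
      apply hx
      have h1 : x.1 = 0 := by nlinarith [sq_nonneg x.1, sq_nonneg x.2]
      have h2 : x.2 = 0 := by nlinarith [sq_nonneg x.1, sq_nonneg x.2]
      exact Prod.ext h1 h2
    have hy : y = ((y.1 * x.1 + y.2 * x.2) / d) • x
        + ((y.2 * x.1 - y.1 * x.2) / d) • ((-x.2, x.1) : ℝ × ℝ) := by
      apply Prod.ext <;> simp [Prod.smul_def] <;> field_simp <;> ring
    have : (Pi.single i y : Fin n → ℝ × ℝ) =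
        ((y.1 * x.1 + y.2 * x.2) / d) • (Pi.single i x : Fin n → ℝ × ℝ)
        + ((y.2 * x.1 - y.1 * x.2) / d) • (Pi.single i ((-x.2, x.1) : ℝ × ℝ) : Fin n → ℝ × ℝ) := by
      rw [← Pi.single_smul, ← Pi.single_smul, ← Pi.single_add, ← hy]
    rw [this]
    exact V.add_mem (V.smul_mem _ hxV) (V.smul_mem _ hrot)
  -- the support set
  set S : Finset (Fin n) := Finset.univ.filter
    (fun i => Pi.single i ((1, 0) : ℝ × ℝ) ∈ V) with hS_def
  have hone : ((1, 0) : ℝ × ℝ) ≠ 0 := by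
    simp [Prod.ext_iff]
  -- characterization of V
  have hchar : ∀ v : Fin n → ℝ × ℝ, v ∈ V ↔ ∀ j ∉ S, v j = 0 := by
    intro v
    constructor
    · intro hv j hj
      by_contra hne
      exact hj (Finset.mem_filter.mpr ⟨Finset.mem_univ _,
        full j (v j) hne (single_mem v hv j) (1, 0)⟩)
    · intro hz
      have hv : v = ∑ j : Fin n, Pi.single j (v j) := (Finset.univ_sum_single v).symm
      rw [hv]
      apply Submodule.sum_mem
      intro j _
      by_cases hj : j ∈ S
      · exact full j (1, 0) hone ((Finset.mem_filter.mp hj).2) (v j)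
      · rw [hz j hj]
        simp
  refine ⟨S, ?_, hchar⟩
  -- compute the dimension
  let e : V →ₗ[ℝ] ({j // j ∈ S} → ℝ × ℝ) :=
    (LinearMap.funLeft ℝ (ℝ × ℝ) (fun j : S => (j : Fin n))).comp V.subtype
  have hinj : Function.Injective e := by
    intro ⟨v, hv⟩ ⟨w, hw⟩ h
    apply Subtype.ext
    funext j
    by_cases hj : j ∈ S
    · exact congrFun h ⟨j, hj⟩
    · show v j = w j
      rw [(hchar v).mp hv j hj, (hchar w).mp hw j hj]
  have hsurj : Function.Surjective e := by
    intro f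
    refine ⟨⟨fun j => if h : j ∈ S then f ⟨j, h⟩ else 0, ?_⟩, ?_⟩
    · rw [hchar]
      intro j hj
      simp [hj]
    · funext j
      simp [e, LinearMap.funLeft, j.2]
  have heq := LinearEquiv.finrank_eq (LinearEquiv.ofBijective e ⟨hinj, hsurj⟩)
  rw [hdim, Module.finrank_pi_fintype] at heq
  simp only [Module.finrank_prod, Module.finrank_self, Finset.sum_const,
    Finset.card_univ, Fintype.card_coe, smul_eq_mul] at heq
  omega
end

section
/- Let ℝ^{2n+2} be realized as (Fin n → ℝ²) × ℝ², and for θ : Fin n → ℝ let ρ_θ be the linear map rotating the i-th ℝ²-factor of the first component by angle θ i and acting as the identity on the second ℝ²-component. Let V be a linear subspace with dim_ℝ V = 2k+1 such that ρ_θ maps V into V for every θ : Fin n → ℝ. Then there exist a k-element subset S of Fin n and a one-dimensional subspace L of ℝ² such that V = {(v, w) | v j = 0 for all j ∉ S, and w ∈ L}, i.e. V is the direct sum of the coordinate planes indexed by S together with the line L in the last ℝ²-factor. -/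
/-- A real `(2k+1)`-dimensional subspace of `ℝ^{2n+2} = (Fin n → ℝ²) × ℝ²`
invariant under all blockwise rotations of the first factor (acting trivially on the last
`ℝ²`-factor) is the direct sum of `k` coordinate planes together with a line `L ⊆ ℝ²`
in the last factor. -/
theorem torus_fixed_points_real_grassmannian_odd (n k : ℕ)
    (V : Submodule ℝ ((Fin n → ℝ × ℝ) × (ℝ × ℝ)))
    (hdim : Module.finrank ℝ V = 2 * k + 1)
    (hinv : ∀ θ : Fin n → ℝ, ∀ p ∈ V,
      ((fun i => (Real.cos (θ i) * (p.1 i).1 - Real.sin (θ i) * (p.1 i).2,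
                  Real.sin (θ i) * (p.1 i).1 + Real.cos (θ i) * (p.1 i).2)), p.2) ∈ V) :
    ∃ (S : Finset (Fin n)) (L : Submodule ℝ (ℝ × ℝ)), S.card = k ∧
      Module.finrank ℝ L = 1 ∧
      ∀ p : (Fin n → ℝ × ℝ) × (ℝ × ℝ),
        p ∈ V ↔ (∀ j ∉ S, p.1 j = 0) ∧ p.2 ∈ L := by
  classical
  -- block projections stay in V
  have hblock : ∀ p ∈ V, ∀ i : Fin n,
      ((Pi.single i (p.1 i) : Fin n → ℝ × ℝ), (0 : ℝ × ℝ)) ∈ V := by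
    intro p hp i
    have hq := hinv (fun j => if j = i then Real.pi else 0) p hp
    have h2 := V.smul_mem (2⁻¹ : ℝ) (V.sub_mem hp hq)
    convert h2 using 1
    refine Prod.ext ?_ ?_
    · funext j
      by_cases hj : j = i
      · subst hj
        simp only [Pi.single_apply, if_pos rfl, Prod.smul_def, Prod.fst_sub, Prod.snd_sub,
          Pi.sub_apply, Pi.smul_apply, Real.cos_pi, Real.sin_pi, smul_eq_mul]
        refine Prod.ext ?_ ?_ <;> simp <;> ring
      · simp [Pi.single_apply, hj, Prod.ext_iff]
    · simp
  -- rotating a single block by π/2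
  have hrot : ∀ (i : Fin n) (x y : ℝ),
      ((Pi.single i ((x, y) : ℝ × ℝ) : Fin n → ℝ × ℝ), (0 : ℝ × ℝ)) ∈ V →
      ((Pi.single i ((-y, x) : ℝ × ℝ) : Fin n → ℝ × ℝ), (0 : ℝ × ℝ)) ∈ V := by
    intro i x y hq
    have h := hinv (fun j => if j = i then Real.pi / 2 else 0)
      ((Pi.single i ((x, y) : ℝ × ℝ) : Fin n → ℝ × ℝ), (0 : ℝ × ℝ)) hq
    convert h using 2
    funext j
    by_cases hj : j = i
    · subst hj
      simp [Pi.single_apply, Real.cos_pi_div_two, Real.sin_pi_div_two, Prod.ext_iff]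
    · simp [Pi.single_apply, hj, Prod.ext_iff]
  -- if some vector of V has nonzero i-th block, the whole i-th block is in V
  have hspan : ∀ (i : Fin n) (a b : ℝ), (a, b) ≠ (0 : ℝ × ℝ) →
      ((Pi.single i ((a, b) : ℝ × ℝ) : Fin n → ℝ × ℝ), (0 : ℝ × ℝ)) ∈ V →
      ((Pi.single i (((1 : ℝ), (0 : ℝ)) : ℝ × ℝ) : Fin n → ℝ × ℝ), (0 : ℝ × ℝ)) ∈ V := by
    intro i a b hab hq
    have hq' := hrot i a b hq
    have hd : a ^ 2 + b ^ 2 ≠ 0 := by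
      intro h
      apply hab
      have ha : a = 0 := by nlinarith [sq_nonneg a, sq_nonneg b]
      have hb : b = 0 := by nlinarith [sq_nonneg a, sq_nonneg b]
      simp [ha, hb]
    have hmem := V.add_mem (V.smul_mem (a / (a ^ 2 + b ^ 2)) hq)
      (V.smul_mem (-b / (a ^ 2 + b ^ 2)) hq')
    convert hmem using 1
    refine Prod.ext ?_ ?_
    · funext j
      by_cases hj : j = i
      · subst hj
        simp only [Pi.single_apply, if_pos rfl, Prod.fst_add, Prod.snd_add, Pi.add_apply,
          Prod.smul_def, Prod.smul_fst, Prod.smul_snd, Pi.smul_apply, smul_eq_mul]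
        refine Prod.ext ?_ ?_ <;> simp <;> field_simp <;> ring
      · simp [Pi.single_apply, hj, Prod.ext_iff]
    · simp
  -- the set of full blocks
  set S : Finset (Fin n) := Finset.univ.filter
    (fun i => ((Pi.single i (((1 : ℝ), (0 : ℝ)) : ℝ × ℝ) : Fin n → ℝ × ℝ), (0 : ℝ × ℝ)) ∈ V)
    with hS
  have hSmem : ∀ i : Fin n, i ∈ S ↔
      ((Pi.single i (((1 : ℝ), (0 : ℝ)) : ℝ × ℝ) : Fin n → ℝ × ℝ), (0 : ℝ × ℝ)) ∈ V := by
    intro i; simp [hS]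
  -- the line in the last factor
  set L : Submodule ℝ (ℝ × ℝ) :=
    Submodule.comap (LinearMap.inr ℝ (Fin n → ℝ × ℝ) (ℝ × ℝ)) V with hL
  have hLmem : ∀ w : ℝ × ℝ, w ∈ L ↔ ((0 : Fin n → ℝ × ℝ), w) ∈ V := by
    intro w; simp [hL]
  -- every single block of S is contained in V
  have hSfull : ∀ i ∈ S, ∀ v : ℝ × ℝ,
      ((Pi.single i v : Fin n → ℝ × ℝ), (0 : ℝ × ℝ)) ∈ V := by
    intro i hi v
    have h1 := (hSmem i).1 hi
    have h2 := hrot i 1 0 h1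
    have h2' : ((Pi.single i (((0 : ℝ), (1 : ℝ)) : ℝ × ℝ) : Fin n → ℝ × ℝ), (0 : ℝ × ℝ)) ∈ V := by
      convert h2 using 2; norm_num
    have hmem := V.add_mem (V.smul_mem v.1 h1) (V.smul_mem v.2 h2')
    convert hmem using 1
    refine Prod.ext ?_ ?_
    · funext j
      by_cases hj : j = i
      · subst hj
        simp [Pi.single_apply, Prod.ext_iff]
      · simp [Pi.single_apply, hj, Prod.ext_iff]
    · simp
  -- the membership characterization
  have hchar : ∀ p : (Fin n → ℝ × ℝ) × (ℝ × ℝ),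
      p ∈ V ↔ (∀ j ∉ S, p.1 j = 0) ∧ p.2 ∈ L := by
    intro p
    constructor
    · intro hp
      constructor
      · intro j hj
        by_contra hne
        apply hj
        rw [hSmem]
        exact hspan j (p.1 j).1 (p.1 j).2 (by simpa using hne) (by simpa using hblock p hp j)
      · rw [hLmem]
        have hsum : (∑ i : Fin n,
            ((Pi.single i (p.1 i) : Fin n → ℝ × ℝ), (0 : ℝ × ℝ))) ∈ V :=
          Submodule.sum_mem V (fun i _ => hblock p hp i)
        have h2 := V.sub_mem hp hsum
        convert h2 using 1
        refine Prod.ext ?_ ?_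
        · simp [Prod.fst_sub, Prod.fst_sum, Finset.univ_sum_single]
        · simp [Prod.snd_sub, Prod.snd_sum]
    · rintro ⟨h1, h2⟩
      have hsum : (∑ i : Fin n,
          ((Pi.single i (p.1 i) : Fin n → ℝ × ℝ), (0 : ℝ × ℝ))) ∈ V := by
        refine Submodule.sum_mem V (fun i _ => ?_)
        by_cases hi : i ∈ S
        · exact hSfull i hi _
        · rw [h1 i hi]
          simp
          exact V.zero_mem
      have hmem := V.add_mem ((hLmem p.2).1 h2) hsum
      convert hmem using 1
      refine Prod.ext ?_ ?_
      · simp [Prod.fst_add, Prod.fst_sum, Finset.univ_sum_single]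
      · simp [Prod.snd_add, Prod.snd_sum]
  -- linear equivalence computing the dimension
  let e : V ≃ₗ[ℝ] ((↑S → ℝ × ℝ) × L) :=
    { toFun := fun v => (fun i => v.1.1 i.1, ⟨v.1.2, ((hchar v.1).1 v.2).2⟩)
      invFun := fun x => ⟨((fun j => if h : j ∈ S then x.1 ⟨j, h⟩ else 0), x.2),
        (hchar _).2 ⟨fun j hj => by simp [hj], x.2.2⟩⟩
      map_add' := fun v w => rfl
      map_smul' := fun c v => rfl
      left_inv := fun v => by
        apply Subtype.ext
        refine Prod.ext ?_ rfl
        funext j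
        by_cases hj : j ∈ S
        · simp [hj]
        · simp [hj, ((hchar v.1).1 v.2).1 j hj]
      right_inv := fun x => by
        refine Prod.ext ?_ ?_
        · funext i
          simp
        · rfl }
  have hfr : Module.finrank ℝ V = S.card * 2 + Module.finrank ℝ L := by
    rw [e.finrank_eq, Module.finrank_prod, Module.finrank_pi_fintype ℝ]
    have h2 : Module.finrank ℝ (ℝ × ℝ) = 2 := by
      rw [Module.finrank_prod, Module.finrank_self]
    simp [h2, Fintype.card_coe]
  have hLle : Module.finrank ℝ L ≤ 2 := by
    have := Submodule.finrank_le L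
    rwa [show Module.finrank ℝ (ℝ × ℝ) = 2 by
      rw [Module.finrank_prod, Module.finrank_self]] at this
  rw [hdim] at hfr
  refine ⟨S, L, by omega, by omega, hchar⟩
end

section
/- Fix integers 0 ≤ k ≤ n with n ≥ 1. The map Θ : A(n,k) × A(n,k) → (𝒮 → R) × (𝒮 → R) defined by Θ(f, h) = (f, (α₁α₂⋯αₙ)·h) is injective and its image is exactly the odd GKM module B(n,k). In particular, every pair (f, g) ∈ B(n,k) can be written uniquely as g(S) = (α₁α₂⋯αₙ)·h(S) with h ∈ A(n,k), and Θ is an isomorphism of R-modules onto B(n,k). -/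
open MvPolynomial Finset

lemma prime_X_sub_X {n : ℕ} (i j : Fin n) (hij : i ≠ j) :
    Prime (X j - X i : MvPolynomial (Fin n) ℚ) := by
  let E := (renameEquiv ℚ (Equiv.optionSubtypeNe j).symm).trans
    (optionEquivLeft ℚ {b : Fin n // b ≠ j})
  rw [← MulEquiv.prime_iff E.toMulEquiv]
  have hE : E.toMulEquiv (X j - X i : MvPolynomial (Fin n) ℚ)
      = Polynomial.X - Polynomial.C (X ⟨i, hij⟩) := by
    show E (X j - X i) = _
    simp [E, Equiv.optionSubtypeNe_symm_self, Equiv.optionSubtypeNe_symm_of_ne hij,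
      optionEquivLeft_X_none, optionEquivLeft_X_some]
  rw [hE]
  exact Polynomial.prime_X_sub_C _

lemma prime_X_add_X {n : ℕ} (i j : Fin n) (hij : i ≠ j) :
    Prime (X j + X i : MvPolynomial (Fin n) ℚ) := by
  let E := (renameEquiv ℚ (Equiv.optionSubtypeNe j).symm).trans
    (optionEquivLeft ℚ {b : Fin n // b ≠ j})
  rw [← MulEquiv.prime_iff E.toMulEquiv]
  have hE : E.toMulEquiv (X j + X i : MvPolynomial (Fin n) ℚ)
      = Polynomial.X - Polynomial.C (-(X ⟨i, hij⟩)) := by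
    show E (X j + X i) = _
    simp [E, Equiv.optionSubtypeNe_symm_self, Equiv.optionSubtypeNe_symm_of_ne hij,
      optionEquivLeft_X_none, optionEquivLeft_X_some, sub_neg_eq_add]
  rw [hE]
  exact Polynomial.prime_X_sub_C _

lemma prodX_ne_zero {n : ℕ} : (∏ l : Fin n, (X l : MvPolynomial (Fin n) ℚ)) ≠ 0 := by
  rw [Finset.prod_ne_zero_iff]
  exact fun l _ => X_ne_zero l

lemma cancel_prodX {n : ℕ} (i j : Fin n) (hij : i ≠ j) (u : MvPolynomial (Fin n) ℚ)
    (h : ((X j : MvPolynomial (Fin n) ℚ) ^ 2 - X i ^ 2) ∣ (∏ l : Fin n, X l) * u) :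
    ((X j : MvPolynomial (Fin n) ℚ) ^ 2 - X i ^ 2) ∣ u := by
  have hp : Prime (X j - X i : MvPolynomial (Fin n) ℚ) := prime_X_sub_X i j hij
  have hq : Prime (X j + X i : MvPolynomial (Fin n) ℚ) := prime_X_add_X i j hij
  -- evaluation sending X j ↦ X i
  set σ : MvPolynomial (Fin n) ℚ →ₐ[ℚ] MvPolynomial (Fin n) ℚ :=
    aeval (fun l => if l = j then X i else X l) with hσdef
  have hσj : σ (X j) = X i := by simp [hσdef]
  have hσi : σ (X i) = X i := by simp [hσdef, hij]
  have hσp : σ (X j - X i) = 0 := by rw [map_sub, hσj, hσi, sub_self]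
  have hσprod : σ (∏ l : Fin n, X l) ≠ 0 := by
    rw [map_prod, Finset.prod_ne_zero_iff]
    intro l _
    simp only [hσdef, aeval_X]
    split <;> exact X_ne_zero _
  have hpprod : ¬ (X j - X i : MvPolynomial (Fin n) ℚ) ∣ ∏ l : Fin n, X l := by
    rintro ⟨v, hv⟩
    exact hσprod (by rw [hv, map_mul, hσp, zero_mul])
  have hpq : ¬ (X j - X i : MvPolynomial (Fin n) ℚ) ∣ (X j + X i) := by
    rintro ⟨v, hv⟩
    have : σ (X j + X i) = 0 := by rw [hv, map_mul, hσp, zero_mul]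
    rw [map_add, hσj, hσi] at this
    exact X_ne_zero i (add_self_eq_zero.mp this)
  -- evaluation sending X j ↦ -X i
  set τ : MvPolynomial (Fin n) ℚ →ₐ[ℚ] MvPolynomial (Fin n) ℚ :=
    aeval (fun l => if l = j then -X i else X l) with hτdef
  have hτq : τ (X j + X i) = 0 := by
    rw [map_add]
    simp [hτdef, hij]
  have hτprod : τ (∏ l : Fin n, X l) ≠ 0 := by
    rw [map_prod, Finset.prod_ne_zero_iff]
    intro l _
    simp only [hτdef, aeval_X]
    split
    · exact neg_ne_zero.mpr (X_ne_zero _)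
    · exact X_ne_zero _
  have hqprod : ¬ (X j + X i : MvPolynomial (Fin n) ℚ) ∣ ∏ l : Fin n, X l := by
    rintro ⟨v, hv⟩
    exact hτprod (by rw [hv, map_mul, hτq, zero_mul])
  have hfac : ((X j : MvPolynomial (Fin n) ℚ) ^ 2 - X i ^ 2) = (X j - X i) * (X j + X i) := by
    ring
  rw [hfac] at h ⊢
  have hpu : (X j - X i : MvPolynomial (Fin n) ℚ) ∣ u :=
    (hp.dvd_mul.mp ((dvd_mul_right _ _).trans h)).resolve_left hpprod
  have hqu : (X j + X i : MvPolynomial (Fin n) ℚ) ∣ u :=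
    (hq.dvd_mul.mp ((dvd_mul_left _ _).trans h)).resolve_left hqprod
  obtain ⟨v, rfl⟩ := hqu
  have hpv : (X j - X i : MvPolynomial (Fin n) ℚ) ∣ v :=
    (hp.dvd_mul.mp hpu).resolve_left hpq
  obtain ⟨w, rfl⟩ := hpv
  exact ⟨w, by ring⟩

/-- `𝒮`: the collection of `k`-element subsets of `{1,…,n}` (here `Fin n`). -/
abbrev GKMIndex (n k : ℕ) := {S : Finset (Fin n) // S.card = k}

/-- Membership in the real GKM ring `A(n,k)`. -/
def memA (n k : ℕ) (f : GKMIndex n k → MvPolynomial (Fin n) ℚ) : Prop :=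
  ∀ (S S' : GKMIndex n k) (i j : Fin n),
    i ∈ S.1 → j ∉ S.1 → S'.1 = insert j (S.1.erase i) →
      ((X j) ^ 2 - (X i) ^ 2) ∣ (f S - f S')

/-- Membership in the odd GKM module `B(n,k)`: both components satisfy the adjacency
divisibility condition, and `α₁⋯αₙ` divides the second component everywhere. -/
def memB (n k : ℕ)
    (p : (GKMIndex n k → MvPolynomial (Fin n) ℚ) × (GKMIndex n k → MvPolynomial (Fin n) ℚ)) :
    Prop :=
  memA n k p.1 ∧ memA n k p.2 ∧
    ∀ S : GKMIndex n k, (∏ l : Fin n, (X l : MvPolynomial (Fin n) ℚ)) ∣ p.2 S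

/-- The map `Θ(f, h) = (f, (α₁α₂⋯αₙ)·h)`. -/
noncomputable def Theta (n k : ℕ)
    (p : (GKMIndex n k → MvPolynomial (Fin n) ℚ) × (GKMIndex n k → MvPolynomial (Fin n) ℚ)) :
    (GKMIndex n k → MvPolynomial (Fin n) ℚ) × (GKMIndex n k → MvPolynomial (Fin n) ℚ) :=
  (p.1, fun S => (∏ l : Fin n, (X l : MvPolynomial (Fin n) ℚ)) * p.2 S)

/-- `Θ : A(n,k) × A(n,k) → (𝒮 → R) × (𝒮 → R)`, `Θ(f,h) = (f, (α₁⋯αₙ)·h)`,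
is an injective `R`-linear map with image exactly `B(n,k)`; hence every `(f,g) ∈ B(n,k)`
has `g = (α₁⋯αₙ)·h` for a unique `h ∈ A(n,k)`. -/
theorem odd_GKM_module_iso (n k : ℕ) (hk : k ≤ n) (hn : 1 ≤ n) :
    Set.InjOn (Theta n k) {p | memA n k p.1 ∧ memA n k p.2} ∧
    Theta n k '' {p | memA n k p.1 ∧ memA n k p.2} = {p | memB n k p} ∧
    (∀ p q, Theta n k (p + q) = Theta n k p + Theta n k q) ∧
    (∀ (c : MvPolynomial (Fin n) ℚ) p, Theta n k (c • p) = c • Theta n k p) := by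
  refine ⟨?_, ?_, ?_, ?_⟩
  · -- injectivity
    rintro p _ q _ heq
    have h1 : p.1 = q.1 := (Prod.ext_iff.mp heq).1
    have h2 := (Prod.ext_iff.mp heq).2
    have h2' : p.2 = q.2 := funext fun S =>
      mul_left_cancel₀ prodX_ne_zero (by unfold Theta at h2; exact congrFun h2 S)
    exact Prod.ext h1 h2'
  · -- image
    ext p
    constructor
    · rintro ⟨⟨f, h⟩, ⟨hf, hh⟩, rfl⟩
      refine ⟨hf, ?_, fun S => dvd_mul_right _ _⟩
      intro S S' i j hi hj hS'
      have := (hh S S' i j hi hj hS').mul_left (∏ l : Fin n, (X l : MvPolynomial (Fin n) ℚ))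
      rwa [mul_sub] at this
    · rintro ⟨hf, hg, hdvd⟩
      choose h hspec using hdvd
      refine ⟨(p.1, h), ⟨hf, ?_⟩, ?_⟩
      · intro S S' i j hi hj hS'
        have hij : i ≠ j := fun hIJ => hj (hIJ ▸ hi)
        apply cancel_prodX i j hij
        have := hg S S' i j hi hj hS'
        rwa [hspec S, hspec S', ← mul_sub] at this
      · refine Prod.ext rfl ?_
        exact funext fun S => (hspec S).symm
  · intro p q
    refine Prod.ext rfl (funext fun S => ?_)
    show (∏ l : Fin n, (X l : MvPolynomial (Fin n) ℚ)) * (p.2 S + q.2 S) = _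
    rw [mul_add]
    unfold Theta
    rfl
  · intro c p
    refine Prod.ext rfl (funext fun S => ?_)
    show (∏ l : Fin n, (X l : MvPolynomial (Fin n) ℚ)) * (c * p.2 S)
        = c * ((∏ l : Fin n, (X l : MvPolynomial (Fin n) ℚ)) * p.2 S)
    ring
end

section
/- Fix integers 0 ≤ k ≤ n with n ≥ 1, and identify B(n,k) with an R-submodule of (𝒮 → R) × (𝒮 → R). If (σ_S)_{S∈𝒮} is any basis of A(n,k) as an R-module, then the family consisting of the pairs (σ_S, 0) for S ∈ 𝒮 together with the pairs (0, (α₁α₂⋯αₙ)·σ_S) for S ∈ 𝒮 is a basis of B(n,k) as an R-module. In particular B(n,k) is a free R-module of rank 2·|𝒮|. -/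
open MvPolynomial Finset

lemma X_prime' (n : ℕ) (l : Fin n) : Prime (X l : MvPolynomial (Fin n) ℚ) := by
  classical
  set φ : MvPolynomial (Fin n) ℚ →ₐ[ℚ] MvPolynomial (Fin n) ℚ :=
    aeval (fun m => if m = l then (0 : MvPolynomial (Fin n) ℚ) else X m) with hφ
  have hφX : φ (X l) = 0 := by simp [hφ]
  have hmono : ∀ (m : (Fin n) →₀ ℕ) (c : ℚ),
      φ (monomial m c) = if m l = 0 then monomial m c else 0 := by
    intro m c
    rw [hφ, aeval_monomial]
    split_ifs with h0
    · have hl : l ∉ m.support := by simp [Finsupp.mem_support_iff, h0]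
      rw [monomial_eq]
      congr 1
      refine Finsupp.prod_congr (fun i hi => ?_)
      have : i ≠ l := fun h => hl (h ▸ hi)
      simp [this]
    · rw [Finsupp.prod]
      have hl : l ∈ m.support := by simp [Finsupp.mem_support_iff, h0]
      rw [Finset.prod_eq_zero hl (by simp [zero_pow h0]), mul_zero]
  have key : ∀ q : MvPolynomial (Fin n) ℚ, (X l : MvPolynomial (Fin n) ℚ) ∣ q ↔ φ q = 0 := by
    intro q
    constructor
    · rintro ⟨r, rfl⟩; rw [map_mul, hφX, zero_mul]
    · intro h
      have hqsub : (X l : MvPolynomial (Fin n) ℚ) ∣ q - φ q := by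
        conv in q - φ q =>
          rw [← support_sum_monomial_coeff q, map_sum, ← Finset.sum_sub_distrib]
        refine Finset.dvd_sum (fun m hm => ?_)
        rw [hmono]
        split_ifs with h0
        · simp
        · rw [sub_zero]
          exact X_dvd_monomial.mpr (Or.inr h0)
      simpa [h] using hqsub
  refine ⟨X_ne_zero l, ?_, ?_⟩
  · intro hu
    have := (hu.map φ)
    rw [hφX] at this
    exact one_ne_zero (isUnit_zero_iff.mp this).symm
  · intro a b hab
    rw [key, map_mul, mul_eq_zero] at hab
    exact hab.imp (key a).mpr (key b).mpr

lemma cancel_prime' {R : Type*} [CommRing R] [IsDomain R] {p d h : R}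
    (hp : Prime p) (hpd : ¬ p ∣ d) (hd : d ∣ p * h) : d ∣ h := by
  obtain ⟨q, hq⟩ := hd
  have hpq : p ∣ q := ((hp.dvd_or_dvd ⟨h, hq.symm⟩).resolve_left hpd)
  obtain ⟨q', rfl⟩ := hpq
  refine ⟨q', mul_left_cancel₀ hp.ne_zero ?_⟩
  rw [hq]; ring

lemma cancel_prod' {R ι : Type*} [CommRing R] [IsDomain R] [DecidableEq ι] {d h : R} (s : Finset ι) (p : ι → R)
    (hp : ∀ i ∈ s, Prime (p i)) (hpd : ∀ i ∈ s, ¬ p i ∣ d)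
    (hd : d ∣ (∏ i ∈ s, p i) * h) : d ∣ h := by
  induction s using Finset.induction_on with
  | empty => simpa using hd
  | insert _ _ hx ih =>
    rw [Finset.prod_insert hx, mul_assoc] at hd
    exact ih (fun i hi => hp i (mem_insert_of_mem hi))
      (fun i hi => hpd i (mem_insert_of_mem hi))
      (cancel_prime' (hp _ (mem_insert_self _ _)) (hpd _ (mem_insert_self _ _)) hd)

lemma not_X_dvd' (n : ℕ) (i j l : Fin n) (hij : i ≠ j) :
    ¬ (X l : MvPolynomial (Fin n) ℚ) ∣ (X j) ^ 2 - (X i) ^ 2 := by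
  rintro ⟨q, hq⟩
  set v : Fin n → ℚ := fun m => if m = l then 0 else if m = j then 2 else 1 with hv
  have h := congrArg (eval v) hq
  simp only [map_sub, map_mul, map_pow, eval_X] at h
  have hvl : v l = 0 := by simp [hv]
  rw [hvl, zero_mul] at h
  by_cases hjl : j = l
  · have hil : i ≠ l := fun h' => hij (h' ▸ hjl.symm ▸ rfl)
    have : v j = 0 := by simp [hv, hjl]
    have hi : v i = 1 := by simp [hv, hil, hij]
    rw [this, hi] at h; norm_num at h
  · have hj : v j = 2 := by simp [hv, hjl]
    by_cases hil : i = l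
    · have : v i = 0 := by simp [hv, hil]
      rw [this, hj] at h; norm_num at h
    · have : v i = 1 := by simp [hv, hil, hij]
      rw [this, hj] at h; norm_num at h

/-- If `(σ_S)` is any `R`-basis of `A(n,k)`, then the pairs `(σ_S, 0)`
together with `(0, (α₁⋯αₙ)·σ_S)` form an `R`-basis of `B(n,k)`; in particular `B(n,k)`
is a free `R`-module of rank `2·|𝒮|`. -/
theorem canonical_basis_odd_real_grassmannian (n k : ℕ) (hk : k ≤ n) (hn : 1 ≤ n)
    (σ : GKMIndex n k → (GKMIndex n k → MvPolynomial (Fin n) ℚ))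
    (hmem : ∀ S, memA n k (σ S))
    (hbasis : ∀ f : GKMIndex n k → MvPolynomial (Fin n) ℚ, memA n k f →
      ∃! c : GKMIndex n k → MvPolynomial (Fin n) ℚ,
        f = fun S' => ∑ S : GKMIndex n k, c S * σ S S') :
    (∀ S : GKMIndex n k, memB n k (σ S, 0)) ∧
    (∀ S : GKMIndex n k,
      memB n k (0, fun S' => (∏ l : Fin n, (X l : MvPolynomial (Fin n) ℚ)) * σ S S')) ∧
    (∀ p, memB n k p →
      ∃! cd : (GKMIndex n k → MvPolynomial (Fin n) ℚ) × (GKMIndex n k → MvPolynomial (Fin n) ℚ),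
        p = (fun S' => ∑ S : GKMIndex n k, cd.1 S * σ S S',
             fun S' => ∑ S : GKMIndex n k,
               cd.2 S * ((∏ l : Fin n, (X l : MvPolynomial (Fin n) ℚ)) * σ S S'))) := by

  classical
  set π : MvPolynomial (Fin n) ℚ := ∏ l : Fin n, (X l : MvPolynomial (Fin n) ℚ) with hπ
  have hπne : π ≠ 0 := Finset.prod_ne_zero_iff.mpr (fun l _ => X_ne_zero l)
  have memA0 : memA n k (0 : GKMIndex n k → MvPolynomial (Fin n) ℚ) := by
    intro S S' i j _ _ _; simpa using dvd_zero _
  refine ⟨?_, ?_, ?_⟩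
  · intro S
    exact ⟨hmem S, memA0, fun S' => dvd_zero _⟩
  · intro S
    refine ⟨memA0, ?_, fun S' => ⟨σ S S', rfl⟩⟩
    intro T T' i j hi hj hT'
    have := hmem S T T' i j hi hj hT'
    calc (X j : MvPolynomial (Fin n) ℚ) ^ 2 - (X i) ^ 2 ∣ π * (σ S T - σ S T') :=
          this.mul_left π
      _ = π * σ S T - π * σ S T' := by ring
  · intro p hp
    obtain ⟨hp1, hp2, hp3⟩ := hp
    obtain ⟨c, hc, hcuniq⟩ := hbasis p.1 hp1
    choose g hg using hp3
    have hgA : memA n k g := by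
      intro S S' i j hi hj hS'
      have hij : i ≠ j := fun h => hj (h ▸ hi)
      have hd : ((X j : MvPolynomial (Fin n) ℚ)) ^ 2 - (X i) ^ 2 ∣ π * (g S - g S') := by
        have := hp2 S S' i j hi hj hS'
        rwa [hg S, hg S', show π * g S - π * g S' = π * (g S - g S') by ring] at this
      exact cancel_prod' Finset.univ (fun l => (X l : MvPolynomial (Fin n) ℚ))
        (fun l _ => X_prime' n l) (fun l _ => not_X_dvd' n i j l hij) hd
    obtain ⟨d, hd, hduniq⟩ := hbasis g hgA
    refine ⟨(c, d), ?_, ?_⟩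
    · refine Prod.ext hc ?_
      funext S'
      rw [hg S', congrFun hd S', Finset.mul_sum]
      exact Finset.sum_congr rfl (fun S _ => by ring)
    · rintro ⟨c', d'⟩ hcd
      have h1 : p.1 = fun S' => ∑ S : GKMIndex n k, c' S * σ S S' :=
        congrArg Prod.fst hcd
      have h2 : p.2 = fun S' => ∑ S : GKMIndex n k, d' S * (π * σ S S') :=
        congrArg Prod.snd hcd
      have hg2 : g = fun S' => ∑ S : GKMIndex n k, d' S * σ S S' := by
        funext S'
        refine mul_left_cancel₀ hπne ?_
        rw [← hg S', congrFun h2 S', Finset.mul_sum]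
        exact Finset.sum_congr rfl (fun S _ => by ring)
      exact Prod.ext (hcuniq c' h1) (hduniq d' hg2)
end

section
/- Fix integers 0 ≤ k ≤ n with n ≥ 1. The map Θ : A(n,k) × A(n,k) → (𝒮 × {+1,−1} → R) defined by Θ(f, h)(S, ε) = f(S) + ε·(∏_{i∈S} αᵢ)·h(S) is injective and its image is exactly the oriented GKM ring B̃(n,k); in particular Θ is an isomorphism of R-modules onto B̃(n,k), so B̃(n,k) is a free R-module of rank 2·|𝒮|. -/
open MvPolynomial Finset

/-- The sign `ε ∈ {+1, −1}`, encoded by a `Bool` (`true ↦ +1`, `false ↦ −1`). -/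
noncomputable def sign (n : ℕ) (ε : Bool) : MvPolynomial (Fin n) ℚ :=
  if ε then 1 else -1

/-- Membership in the oriented GKM ring `B̃(n,k)`: for `S, S'` adjacent via `(i,j)` and
each sign `ε`, `(αⱼ − αᵢ) ∣ F(S,ε) − F(S',ε)` and `(αⱼ + αᵢ) ∣ F(S,ε) − F(S',−ε)`, and
for every `S`, `(∏_{i∈S} αᵢ) ∣ F(S,+1) − F(S,−1)`. -/
def memBOr (n k : ℕ) (F : GKMIndex n k × Bool → MvPolynomial (Fin n) ℚ) : Prop :=
  (∀ (S S' : GKMIndex n k) (i j : Fin n) (ε : Bool),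
    i ∈ S.1 → j ∉ S.1 → S'.1 = insert j (S.1.erase i) →
      (X j - X i) ∣ (F (S, ε) - F (S', ε)) ∧
      (X j + X i) ∣ (F (S, ε) - F (S', !ε))) ∧
  (∀ S : GKMIndex n k, (∏ i ∈ S.1, (X i : MvPolynomial (Fin n) ℚ)) ∣
    (F (S, true) - F (S, false)))

/-- The map `Θ(f, h)(S, ε) = f(S) + ε·(∏_{i∈S} αᵢ)·h(S)`. -/
noncomputable def ThetaOr (n k : ℕ)
    (p : (GKMIndex n k → MvPolynomial (Fin n) ℚ) × (GKMIndex n k → MvPolynomial (Fin n) ℚ)) :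
    GKMIndex n k × Bool → MvPolynomial (Fin n) ℚ :=
  fun q => p.1 q.1 + sign n q.2 * ((∏ i ∈ q.1.1, (X i : MvPolynomial (Fin n) ℚ)) * p.2 q.1)

/-! ### Auxiliary lemmas -/

lemma gkm_prime_X {n : ℕ} (j : Fin n) : Prime (X j : MvPolynomial (Fin n) ℚ) := by
  rw [← MulEquiv.prime_iff (renameEquiv ℚ (Equiv.optionSubtypeNe j).symm).toRingEquiv.toMulEquiv]
  have h1 : (renameEquiv ℚ (Equiv.optionSubtypeNe j).symm).toRingEquiv.toMulEquiv (X j)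
      = X none := by
    show (renameEquiv ℚ (Equiv.optionSubtypeNe j).symm) (X j) = X none
    rw [renameEquiv_apply, rename_X, Equiv.optionSubtypeNe_symm_self]
  rw [h1, ← MulEquiv.prime_iff (optionEquivLeft ℚ {b : Fin n // b ≠ j}).toRingEquiv.toMulEquiv]
  have h2 : (optionEquivLeft ℚ {b : Fin n // b ≠ j}).toRingEquiv.toMulEquiv (X none)
      = Polynomial.X := by
    show (optionEquivLeft ℚ _) (X none) = Polynomial.X
    exact optionEquivLeft_X_none ℚ _
  rw [h2]
  exact Polynomial.prime_X

lemma gkm_prime_comb {n : ℕ} {i j : Fin n} (hij : i ≠ j) (c : ℚ) :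
    Prime (X j + C c * X i : MvPolynomial (Fin n) ℚ) := by
  let φ : MvPolynomial (Fin n) ℚ →ₐ[ℚ] MvPolynomial (Fin n) ℚ :=
    aeval (fun m => if m = j then X j + C c * X i else X m)
  let ψ : MvPolynomial (Fin n) ℚ →ₐ[ℚ] MvPolynomial (Fin n) ℚ :=
    aeval (fun m => if m = j then X j - C c * X i else X m)
  have key : ∀ m : Fin n, φ (ψ (X m)) = X m ∧ ψ (φ (X m)) = X m := by
    intro m
    by_cases hm : m = j
    · subst hm
      constructor <;>
      · simp [φ, ψ, aeval_X, hij, algebraMap_eq]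
    · simp [φ, ψ, aeval_X, if_neg hm]
  let e : MvPolynomial (Fin n) ℚ ≃ₐ[ℚ] MvPolynomial (Fin n) ℚ :=
    AlgEquiv.ofAlgHom φ ψ (by ext m : 1; exact (key m).1) (by ext m : 1; exact (key m).2)
  have he : e.toRingEquiv.toMulEquiv (X j) = X j + C c * X i := by
    show φ (X j) = _
    simp [φ, aeval_X]
  rw [← he]
  exact (MulEquiv.prime_iff e.toRingEquiv.toMulEquiv).mpr (gkm_prime_X j)

lemma gkm_sub_eq {n : ℕ} (i j : Fin n) :
    (X j - X i : MvPolynomial (Fin n) ℚ) = X j + C (-1 : ℚ) * X i := by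
  rw [map_neg, map_one]; ring

lemma gkm_add_eq {n : ℕ} (i j : Fin n) :
    (X j + X i : MvPolynomial (Fin n) ℚ) = X j + C (1 : ℚ) * X i := by
  rw [map_one]; ring

lemma gkm_prime_sub {n : ℕ} {i j : Fin n} (hij : i ≠ j) :
    Prime (X j - X i : MvPolynomial (Fin n) ℚ) := by
  rw [gkm_sub_eq]; exact gkm_prime_comb hij (-1)

lemma gkm_prime_add {n : ℕ} {i j : Fin n} (hij : i ≠ j) :
    Prime (X j + X i : MvPolynomial (Fin n) ℚ) := by
  rw [gkm_add_eq]; exact gkm_prime_comb hij 1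

lemma gkm_not_dvd_prod {n : ℕ} {i j : Fin n} (hij : i ≠ j) (c : ℚ) (S : Finset (Fin n))
    (hj : j ∉ S) :
    ¬ (X j + C c * X i : MvPolynomial (Fin n) ℚ) ∣ ∏ m ∈ S, X m := by
  rintro ⟨g, hg⟩
  have := congrArg (aeval (R := ℚ) (fun m : Fin n => if m = j then (-(C c * X i)) else X m)) hg
  rw [map_mul, map_add, map_mul, aeval_X, aeval_C, if_pos rfl, aeval_X, if_neg hij,
    algebraMap_eq, neg_add_cancel, zero_mul, map_prod] at this
  refine absurd this ?_
  apply Finset.prod_ne_zero_iff.mpr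
  intro m hm
  have hmj : m ≠ j := fun h => hj (h ▸ hm)
  rw [aeval_X, if_neg hmj]
  exact X_ne_zero m

lemma gkm_sub_not_dvd_prod {n : ℕ} {i j : Fin n} (hij : i ≠ j) (S : Finset (Fin n))
    (hj : j ∉ S) :
    ¬ (X j - X i : MvPolynomial (Fin n) ℚ) ∣ ∏ m ∈ S, X m := by
  rw [gkm_sub_eq]; exact gkm_not_dvd_prod hij (-1) S hj

lemma gkm_add_not_dvd_prod {n : ℕ} {i j : Fin n} (hij : i ≠ j) (S : Finset (Fin n))
    (hj : j ∉ S) :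
    ¬ (X j + X i : MvPolynomial (Fin n) ℚ) ∣ ∏ m ∈ S, X m := by
  rw [gkm_add_eq]; exact gkm_not_dvd_prod hij 1 S hj

lemma gkm_not_dvd_pair {n : ℕ} {i j : Fin n} (hij : i ≠ j) {c d : ℚ} (hcd : c ≠ d) :
    ¬ (X j + C c * X i : MvPolynomial (Fin n) ℚ) ∣ (X j + C d * X i) := by
  rintro ⟨g, hg⟩
  have h0 : (aeval (R := ℚ) (fun m : Fin n => if m = j then (-(C c * X i)) else X m))
      (X j + C c * X i) = 0 := by
    rw [map_add, map_mul, aeval_X, if_pos rfl, aeval_C, aeval_X, if_neg hij, algebraMap_eq,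
      neg_add_cancel]
  have := congrArg (aeval (R := ℚ) (fun m : Fin n => if m = j then (-(C c * X i)) else X m)) hg
  rw [map_mul, h0, zero_mul, map_add, map_mul, aeval_X, if_pos rfl, aeval_C, aeval_X,
    if_neg hij, algebraMap_eq] at this
  have h1 : (C (d - c) : MvPolynomial (Fin n) ℚ) * X i = 0 := by
    rw [map_sub]; linear_combination this
  exact absurd h1 (mul_ne_zero (C_eq_zero.not.mpr (sub_ne_zero.mpr (Ne.symm hcd))) (X_ne_zero i))

lemma gkm_add_not_dvd_sub {n : ℕ} {i j : Fin n} (hij : i ≠ j) :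
    ¬ (X j + X i : MvPolynomial (Fin n) ℚ) ∣ (X j - X i) := by
  rw [gkm_add_eq, gkm_sub_eq]
  exact gkm_not_dvd_pair hij (by norm_num)

lemma gkm_mul_dvd {n : ℕ} {p q a : MvPolynomial (Fin n) ℚ} (hq : Prime q)
    (hqp : ¬ q ∣ p) (h1 : p ∣ a) (h2 : q ∣ a) : p * q ∣ a := by
  obtain ⟨b, rfl⟩ := h1
  rcases hq.2.2 _ _ h2 with h | h
  · exact absurd h hqp
  · obtain ⟨c, rfl⟩ := h
    exact ⟨c, by ring⟩

lemma gkm_sq_dvd {n : ℕ} {i j : Fin n} (hij : i ≠ j) {a : MvPolynomial (Fin n) ℚ}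
    (h1 : (X j - X i) ∣ a) (h2 : (X j + X i) ∣ a) :
    ((X j : MvPolynomial (Fin n) ℚ) ^ 2 - X i ^ 2) ∣ a := by
  have := gkm_mul_dvd (gkm_prime_add hij) (gkm_add_not_dvd_sub hij) h1 h2
  have e : (X j : MvPolynomial (Fin n) ℚ) ^ 2 - X i ^ 2 = (X j - X i) * (X j + X i) := by ring
  rw [e]; exact this

lemma gkm_two_C_half {n : ℕ} :
    (2 : MvPolynomial (Fin n) ℚ) * C (1/2 : ℚ) = 1 := by
  rw [← map_ofNat (C : ℚ →+* MvPolynomial (Fin n) ℚ) 2, ← map_mul]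
  norm_num

/-- `Θ : A(n,k) × A(n,k) → (𝒮 × {±1} → R)` is injective with image exactly
the oriented GKM ring `B̃(n,k)`; it is an isomorphism of `R`-modules onto `B̃(n,k)`,
so `B̃(n,k)` is a free `R`-module of rank `2·|𝒮|`. -/
theorem oriented_GKM_module_iso (n k : ℕ) (hk : k ≤ n) (hn : 1 ≤ n) :
    Set.InjOn (ThetaOr n k) {p | memA n k p.1 ∧ memA n k p.2} ∧
    ThetaOr n k '' {p | memA n k p.1 ∧ memA n k p.2} = {F | memBOr n k F} ∧
    (∀ p q, ThetaOr n k (p + q) = ThetaOr n k p + ThetaOr n k q) ∧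
    (∀ (c : MvPolynomial (Fin n) ℚ) p, ThetaOr n k (c • p) = c • ThetaOr n k p) := by
  have h2ne : (2 : MvPolynomial (Fin n) ℚ) ≠ 0 := two_ne_zero
  refine ⟨?_, ?_, ?_, ?_⟩
  · -- Injectivity
    intro p hp q hq heq
    have hSt : ∀ S, p.1 S + (∏ m ∈ S.1, (X m : MvPolynomial (Fin n) ℚ)) * p.2 S
        = q.1 S + (∏ m ∈ S.1, (X m : MvPolynomial (Fin n) ℚ)) * q.2 S := by
      intro S
      have := congrFun heq (S, true)
      simpa [ThetaOr, sign] using this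
    have hSf : ∀ S, p.1 S - (∏ m ∈ S.1, (X m : MvPolynomial (Fin n) ℚ)) * p.2 S
        = q.1 S - (∏ m ∈ S.1, (X m : MvPolynomial (Fin n) ℚ)) * q.2 S := by
      intro S
      have := congrFun heq (S, false)
      simp only [ThetaOr, sign, Bool.false_eq_true, if_false] at this
      linear_combination this
    have h1 : p.1 = q.1 := by
      funext S
      have := mul_left_cancel₀ h2ne (show (2:MvPolynomial (Fin n) ℚ) * p.1 S = 2 * q.1 S by
        linear_combination hSt S + hSf S)
      exact this
    have h2 : p.2 = q.2 := by
      funext S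
      have hπ : (∏ m ∈ S.1, (X m : MvPolynomial (Fin n) ℚ)) ≠ 0 :=
        Finset.prod_ne_zero_iff.mpr (fun m _ => X_ne_zero m)
      have e2 : (2 : MvPolynomial (Fin n) ℚ) * ((∏ m ∈ S.1, (X m : MvPolynomial (Fin n) ℚ))
          * p.2 S) = 2 * ((∏ m ∈ S.1, (X m : MvPolynomial (Fin n) ℚ)) * q.2 S) := by
        linear_combination hSt S - hSf S
      exact mul_left_cancel₀ hπ (mul_left_cancel₀ h2ne e2)
    exact Prod.ext h1 h2
  · -- Image
    ext F
    simp only [Set.mem_image, Set.mem_setOf_eq]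
    constructor
    · rintro ⟨p, ⟨hf, hh⟩, rfl⟩
      constructor
      · intro S S' i j ε hi hj hS'
        have hij : i ≠ j := fun h => hj (h ▸ hi)
        have hjE : j ∉ S.1.erase i := fun h => hj (mem_of_mem_erase h)
        have prodS : (∏ m ∈ S.1, (X m : MvPolynomial (Fin n) ℚ))
            = X i * ∏ m ∈ S.1.erase i, X m := (Finset.mul_prod_erase S.1 _ hi).symm
        have prodS' : (∏ m ∈ S'.1, (X m : MvPolynomial (Fin n) ℚ))
            = X j * ∏ m ∈ S.1.erase i, X m := by
          rw [hS', Finset.prod_insert hjE]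
        have df := hf S S' i j hi hj hS'
        have dh := hh S S' i j hi hj hS'
        have sub_dvd_sq : ((X j : MvPolynomial (Fin n) ℚ) - X i) ∣ (X j ^ 2 - X i ^ 2) :=
          ⟨X j + X i, by ring⟩
        have add_dvd_sq : ((X j : MvPolynomial (Fin n) ℚ) + X i) ∣ (X j ^ 2 - X i ^ 2) :=
          ⟨X j - X i, by ring⟩
        have dfm := sub_dvd_sq.trans df
        have dfp := add_dvd_sq.trans df
        have dhm := sub_dvd_sq.trans dh
        have dhp := add_dvd_sq.trans dh
        constructor
        · have key : ThetaOr n k p (S, ε) - ThetaOr n k p (S', ε)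
              = (p.1 S - p.1 S') + sign n ε * ((∏ m ∈ S.1.erase i, X m)
                * (X i * (p.2 S - p.2 S') - (X j - X i) * p.2 S')) := by
            simp only [ThetaOr]
            rw [prodS, prodS']
            ring
          rw [key]
          exact dvd_add dfm
            (((dvd_sub (dhm.mul_left _) (dvd_mul_right _ _)).mul_left _).mul_left _)
        · have hsign : sign n (!ε) = - sign n ε := by cases ε <;> simp [sign]
          have key : ThetaOr n k p (S, ε) - ThetaOr n k p (S', !ε)
              = (p.1 S - p.1 S') + sign n ε * ((∏ m ∈ S.1.erase i, X m)
                * (X i * (p.2 S - p.2 S') + (X j + X i) * p.2 S')) := by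
            simp only [ThetaOr, hsign]
            rw [prodS, prodS']
            ring
          rw [key]
          exact dvd_add dfp
            (((dvd_add (dhp.mul_left _) (dvd_mul_right _ _)).mul_left _).mul_left _)
      · intro S
        refine ⟨2 * p.2 S, ?_⟩
        simp only [ThetaOr, sign, if_pos, Bool.false_eq_true, if_false]
        ring
    · intro hF
      obtain ⟨hEdge, hDiag⟩ := hF
      choose q hq using hDiag
      set c : MvPolynomial (Fin n) ℚ := C (1/2 : ℚ) with hc
      have h2 : (2 : MvPolynomial (Fin n) ℚ) * c = 1 := gkm_two_C_half
      refine ⟨(fun S => c * (F (S, true) + F (S, false)), fun S => c * q S), ⟨?_, ?_⟩, ?_⟩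
      · -- memA for f
        intro S S' i j hi hj hS'
        have hij : i ≠ j := fun h => hj (h ▸ hi)
        have A1 := (hEdge S S' i j true hi hj hS').1
        have A2 := (hEdge S S' i j true hi hj hS').2
        have A3 := (hEdge S S' i j false hi hj hS').1
        have A4 := (hEdge S S' i j false hi hj hS').2
        simp only [Bool.not_true] at A2
        simp only [Bool.not_false] at A4
        have du : (X j - X i : MvPolynomial (Fin n) ℚ)
            ∣ (F (S, true) + F (S, false)) - (F (S', true) + F (S', false)) := by
          have e : (F (S, true) + F (S, false)) - (F (S', true) + F (S', false))
              = (F (S, true) - F (S', true)) + (F (S, false) - F (S', false)) := by ring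
          rw [e]; exact dvd_add A1 A3
        have dv : (X j + X i : MvPolynomial (Fin n) ℚ)
            ∣ (F (S, true) + F (S, false)) - (F (S', true) + F (S', false)) := by
          have e : (F (S, true) + F (S, false)) - (F (S', true) + F (S', false))
              = (F (S, true) - F (S', false)) + (F (S, false) - F (S', true)) := by ring
          rw [e]; exact dvd_add A2 A4
        have dp := gkm_sq_dvd hij du dv
        have e : c * (F (S, true) + F (S, false)) - c * (F (S', true) + F (S', false))
            = c * ((F (S, true) + F (S, false)) - (F (S', true) + F (S', false))) := by ring
        rw [e]
        exact dp.mul_left c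
      · -- memA for h
        intro S S' i j hi hj hS'
        have hij : i ≠ j := fun h => hj (h ▸ hi)
        have hjE : j ∉ S.1.erase i := fun h => hj (mem_of_mem_erase h)
        have prodS : (∏ m ∈ S.1, (X m : MvPolynomial (Fin n) ℚ))
            = X i * ∏ m ∈ S.1.erase i, X m := (Finset.mul_prod_erase S.1 _ hi).symm
        have prodS' : (∏ m ∈ S'.1, (X m : MvPolynomial (Fin n) ℚ))
            = X j * ∏ m ∈ S.1.erase i, X m := by
          rw [hS', Finset.prod_insert hjE]
        have A1 := (hEdge S S' i j true hi hj hS').1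
        have A2 := (hEdge S S' i j true hi hj hS').2
        have A3 := (hEdge S S' i j false hi hj hS').1
        have A4 := (hEdge S S' i j false hi hj hS').2
        simp only [Bool.not_true] at A2
        simp only [Bool.not_false] at A4
        set Pe : MvPolynomial (Fin n) ℚ := ∏ m ∈ S.1.erase i, X m with hPe
        have hqS : F (S, true) - F (S, false) = (X i * Pe) * q S := by
          rw [← prodS]; exact hq S
        have hqS' : F (S', true) - F (S', false) = (X j * Pe) * q S' := by
          rw [← prodS']; exact hq S'
        have d1 : (X j - X i : MvPolynomial (Fin n) ℚ) ∣ (X i * Pe) * (q S - q S') := by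
          have e : (X i * Pe) * (q S - q S')
              = ((F (S, true) - F (S', true)) - (F (S, false) - F (S', false)))
                + (X j - X i) * (Pe * q S') := by
            linear_combination hqS' - hqS
          rw [e]
          exact dvd_add (dvd_sub A1 A3) (dvd_mul_right _ _)
        have d2 : (X j + X i : MvPolynomial (Fin n) ℚ) ∣ (X i * Pe) * (q S - q S') := by
          have e : (X i * Pe) * (q S - q S')
              = ((F (S, true) - F (S', false)) - (F (S, false) - F (S', true)))
                - (X j + X i) * (Pe * q S') := by
            linear_combination - hqS - hqS'
          rw [e]
          exact dvd_sub (dvd_sub A2 A4) (dvd_mul_right _ _)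
        have dq1 : (X j - X i : MvPolynomial (Fin n) ℚ) ∣ (q S - q S') := by
          rcases (gkm_prime_sub hij).2.2 _ _ d1 with h | h
          · exfalso
            apply gkm_sub_not_dvd_prod hij S.1 hj
            rw [prodS]; exact h
          · exact h
        have dq2 : (X j + X i : MvPolynomial (Fin n) ℚ) ∣ (q S - q S') := by
          rcases (gkm_prime_add hij).2.2 _ _ d2 with h | h
          · exfalso
            apply gkm_add_not_dvd_prod hij S.1 hj
            rw [prodS]; exact h
          · exact h
        have dp := gkm_sq_dvd hij dq1 dq2
        have e : c * q S - c * q S' = c * (q S - q S') := by ring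
        rw [e]
        exact dp.mul_left c
      · -- ThetaOr = F
        funext pt
        obtain ⟨S, ε⟩ := pt
        cases ε
        · show c * (F (S, true) + F (S, false))
            + sign n false * ((∏ m ∈ S.1, X m) * (c * q S)) = F (S, false)
          have hsf : sign n false = -1 := by simp [sign]
          rw [hsf]
          linear_combination c * hq S + F (S, false) * h2
        · show c * (F (S, true) + F (S, false))
            + sign n true * ((∏ m ∈ S.1, X m) * (c * q S)) = F (S, true)
          have hst : sign n true = 1 := by simp [sign]
          rw [hst]
          linear_combination (-c) * hq S + F (S, true) * h2
  · intro p q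
    funext pt
    simp only [ThetaOr, Prod.fst_add, Prod.snd_add, Pi.add_apply]
    ring
  · intro c p
    funext pt
    simp only [ThetaOr, Prod.smul_fst, Prod.smul_snd, Pi.smul_apply, smul_eq_mul]
    ring
end

section
/- Fix integers 0 ≤ k ≤ n and a tuple of nonnegative integers (i₁,…,i_k). In the fraction field F of R = ℚ[α₁,…,αₙ], the element Σ_{S∈𝒮} ( ∏_{l=1}^{k} e_l((αᵢ)_{i∈S})^{i_l} ) / ( ∏_{i∈S} ∏_{j∉S} (αⱼ − αᵢ) ), where the sum is over all k-element subsets S of {1,…,n} and e_l denotes the l-th elementary symmetric polynomial of the variables indexed by S, lies in the image of R under the canonical embedding R ↪ F; that is, this sum of rational functions is a polynomial in α₁,…,αₙ. -/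
open MvPolynomial Finset

variable {n : ℕ}

noncomputable def subst (a b : Fin n) : MvPolynomial (Fin n) ℚ →ₐ[ℚ] MvPolynomial (Fin n) ℚ :=
  aeval (fun i => if i = a then X b else X i)

lemma subst_X (a b i : Fin n) : subst a b (X i) = if i = a then X b else X i := aeval_X _ _

lemma dvd_sub_subst (a b : Fin n) (f : MvPolynomial (Fin n) ℚ) :
    (X b - X a) ∣ (subst a b f - f) := by
  induction f using MvPolynomial.induction_on with
  | C r => simp [subst]
  | add p q hp hq =>
    have := dvd_add hp hq
    rw [map_add]
    convert this using 1; ring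
  | mul_X p i hp =>
    rw [map_mul, subst_X]
    rcases eq_or_ne i a with h' | h'
    · rw [if_pos h', h']
      have h2 : (X b - X a : MvPolynomial (Fin n) ℚ) ∣ p * (X b - X a) := Dvd.intro_left _ rfl
      have := dvd_add (hp.mul_right (X b)) h2
      convert this using 1; ring
    · rw [if_neg h']
      have := hp.mul_right (X i)
      convert this using 1; ring

lemma prime_lin (a b : Fin n) (h : a ≠ b) : Prime (X b - X a : MvPolynomial (Fin n) ℚ) := by
  let E : MvPolynomial (Fin n) ℚ ≃ₐ[ℚ] Polynomial (MvPolynomial {i : Fin n // i ≠ a} ℚ) :=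
    (renameEquiv ℚ (Equiv.optionSubtypeNe a).symm).trans (optionEquivLeft ℚ _)
  rw [show (X b - X a : MvPolynomial (Fin n) ℚ) = E.toMulEquiv.symm (E (X b - X a)) by
    simp]
  rw [MulEquiv.prime_iff E.toMulEquiv.symm]
  have : E (X b - X a) = -(Polynomial.X - Polynomial.C (X ⟨b, h.symm⟩)) := by
    simp only [E, map_sub, AlgEquiv.trans_apply, renameEquiv_apply, rename_X,
      Equiv.optionSubtypeNe_symm_self, Equiv.optionSubtypeNe_symm_of_ne h.symm,
      optionEquivLeft_X_some, optionEquivLeft_X_none]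
    ring
  rw [this]
  exact (Polynomial.prime_X_sub_C _).neg


lemma prod_primes_dvd' {α : Type*} [CommRing α] [IsDomain α] {ι : Type*} [DecidableEq ι]
    (s : Finset ι) (f : ι → α) (hp : ∀ p ∈ s, Prime (f p))
    (hnd : ∀ p ∈ s, ∀ q ∈ s, p ≠ q → ¬ f p ∣ f q) :
    ∀ N : α, (∀ p ∈ s, f p ∣ N) → (∏ p ∈ s, f p) ∣ N := by
  induction s using Finset.induction with
  | empty => simp
  | @insert q s hq ih =>
    intro N h
    obtain ⟨M, rfl⟩ := h q (mem_insert_self _ _)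
    rw [prod_insert hq]
    refine mul_dvd_mul_left _ (ih (fun p hp' => hp p (mem_insert_of_mem hp'))
      (fun p hp' r hr' => hnd p (mem_insert_of_mem hp') r (mem_insert_of_mem hr')) M ?_)
    intro p hps
    have hpq : p ≠ q := fun e => hq (e ▸ hps)
    have hdvd := h p (mem_insert_of_mem hps)
    rcases (hp p (mem_insert_of_mem hps)).2.2 _ _ hdvd with h1 | h1
    · exact absurd h1 (hnd p (mem_insert_of_mem hps) q (mem_insert_self _ _) hpq)
    · exact h1


noncomputable def lin (p : Fin n × Fin n) : MvPolynomial (Fin n) ℚ := X p.2 - X p.1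

def SP (n : ℕ) : Finset (Fin n × Fin n) := univ.filter fun p => p.1 < p.2

noncomputable def Vmd (n : ℕ) : MvPolynomial (Fin n) ℚ := ∏ p ∈ SP n, lin p

def cross (S : Finset (Fin n)) (p : Fin n × Fin n) : Prop :=
  (p.1 ∈ S ∧ p.2 ∉ S) ∨ (p.2 ∈ S ∧ p.1 ∉ S)

instance (S : Finset (Fin n)) : DecidablePred (cross S) := fun p => by
  unfold cross; infer_instance

noncomputable def denom (S : Finset (Fin n)) : MvPolynomial (Fin n) ℚ :=
  ∏ p ∈ S ×ˢ (univ \ S), lin p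

noncomputable def co (S : Finset (Fin n)) : MvPolynomial (Fin n) ℚ :=
  (∏ p ∈ (SP n).filter (cross S), (if p.1 ∈ S then (1 : MvPolynomial (Fin n) ℚ) else -1)) *
    ∏ p ∈ (SP n).filter (fun p => ¬ cross S p), lin p

lemma denom_eq_signed (S : Finset (Fin n)) :
    denom S = ∏ q ∈ (SP n).filter (cross S),
      (if q.1 ∈ S then lin q else -lin q) := by
  refine Finset.prod_nbij' (fun p => if p.1 < p.2 then p else p.swap)
    (fun q => if q.1 ∈ S then q else q.swap) ?_ ?_ ?_ ?_ ?_
  · intro p hp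
    rw [mem_product, mem_sdiff] at hp
    obtain ⟨h1, _, h2⟩ := hp
    have hne : p.1 ≠ p.2 := fun e => h2 (e ▸ h1)
    rcases lt_or_gt_of_ne hne with hlt | hgt
    · rw [if_pos hlt, mem_filter, SP, mem_filter]
      exact ⟨⟨mem_univ _, hlt⟩, Or.inl ⟨h1, h2⟩⟩
    · rw [if_neg (not_lt_of_gt hgt), mem_filter, SP, mem_filter]
      exact ⟨⟨mem_univ _, hgt⟩, Or.inr ⟨h1, h2⟩⟩
  · intro q hq
    rw [mem_filter] at hq
    obtain ⟨hq1, hq2⟩ := hq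
    rcases hq2 with ⟨h1, h2⟩ | ⟨h1, h2⟩
    · rw [if_pos h1, mem_product, mem_sdiff]
      exact ⟨h1, mem_univ _, h2⟩
    · rw [if_neg h2, mem_product, mem_sdiff]
      exact ⟨h1, mem_univ _, h2⟩
  · intro p hp
    rw [mem_product, mem_sdiff] at hp
    obtain ⟨h1, _, h2⟩ := hp
    have hne : p.1 ≠ p.2 := fun e => h2 (e ▸ h1)
    rcases lt_or_gt_of_ne hne with hlt | hgt
    · rw [if_pos hlt, if_pos h1]
    · rw [if_neg (not_lt_of_gt hgt), if_neg (show p.swap.1 ∉ S from h2), Prod.swap_swap]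
  · intro q hq
    rw [mem_filter] at hq
    obtain ⟨hq1, hq2⟩ := hq
    rw [SP, mem_filter] at hq1
    rcases hq2 with ⟨h1, h2⟩ | ⟨h1, h2⟩
    · rw [if_pos h1, if_pos hq1.2]
    · rw [if_neg h2, if_neg (show ¬ (q.swap.1 < q.swap.2) from not_lt_of_gt hq1.2),
        Prod.swap_swap]
  · intro p hp
    rw [mem_product, mem_sdiff] at hp
    obtain ⟨h1, _, h2⟩ := hp
    have hne : p.1 ≠ p.2 := fun e => h2 (e ▸ h1)
    rcases lt_or_gt_of_ne hne with hlt | hgt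
    · rw [if_pos hlt, if_pos h1]
    · rw [if_neg (not_lt_of_gt hgt), if_neg (show p.swap.1 ∉ S from h2)]
      simp only [lin, Prod.fst_swap, Prod.snd_swap]
      ring

lemma sign_sq (S : Finset (Fin n)) :
    (∏ p ∈ (SP n).filter (cross S), (if p.1 ∈ S then (1 : MvPolynomial (Fin n) ℚ) else -1)) *
    (∏ p ∈ (SP n).filter (cross S), (if p.1 ∈ S then (1 : MvPolynomial (Fin n) ℚ) else -1)) = 1 := by
  rw [← prod_mul_distrib, Finset.prod_eq_one]
  intro p _
  split_ifs <;> ring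

lemma denom_mul_co (S : Finset (Fin n)) : denom S * co S = Vmd n := by
  have h1 : denom S = (∏ p ∈ (SP n).filter (cross S),
      (if p.1 ∈ S then (1 : MvPolynomial (Fin n) ℚ) else -1)) *
      ∏ p ∈ (SP n).filter (cross S), lin p := by
    rw [denom_eq_signed, ← prod_mul_distrib]
    apply Finset.prod_congr rfl
    intro p _
    split_ifs <;> ring
  rw [h1, co, Vmd, ← Finset.prod_filter_mul_prod_filter_not (SP n) (cross S) lin]
  calc _ = ((∏ p ∈ (SP n).filter (cross S), (if p.1 ∈ S then (1 : MvPolynomial (Fin n) ℚ) else -1)) *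
      (∏ p ∈ (SP n).filter (cross S), (if p.1 ∈ S then (1 : MvPolynomial (Fin n) ℚ) else -1))) *
      ((∏ p ∈ (SP n).filter (cross S), lin p) * ∏ p ∈ (SP n).filter (fun p => ¬ cross S p), lin p) := by ring
    _ = _ := by rw [sign_sq S, one_mul]


lemma X_sub_X_ne_zero {u v : Fin n} (h : u ≠ v) :
    (X v - X u : MvPolynomial (Fin n) ℚ) ≠ 0 := by
  rw [sub_ne_zero]
  exact fun e => h (X_injective e).symm

lemma subst_X_swap (a b : Fin n) (i : Fin n) :
    subst a b (X (Equiv.swap a b i)) = subst a b (X i) := by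
  rcases eq_or_ne i a with rfl | hia
  · rcases eq_or_ne i b with rfl | hib
    · rw [Equiv.swap_self]; rfl
    · rw [Equiv.swap_apply_left, subst_X, subst_X, if_pos rfl, if_neg (Ne.symm hib)]
  · rcases eq_or_ne i b with rfl | hib
    · rw [Equiv.swap_apply_right, subst_X, subst_X, if_pos rfl, if_neg hia]
    · rw [Equiv.swap_apply_of_ne_of_ne hia hib]

lemma mem_image_swap {a b m : Fin n} {S : Finset (Fin n)} :
    m ∈ S.image (Equiv.swap a b) ↔ Equiv.swap a b m ∈ S := by
  constructor
  · rintro h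
    rw [mem_image] at h
    obtain ⟨x, hx, rfl⟩ := h
    rwa [Equiv.swap_apply_self]
  · intro h
    rw [mem_image]
    exact ⟨_, h, Equiv.swap_apply_self _ _ _⟩

lemma image_swap_image {a b : Fin n} (S : Finset (Fin n)) :
    (S.image (Equiv.swap a b)).image (Equiv.swap a b) = S := by
  rw [Finset.image_image]
  have : (Equiv.swap a b) ∘ (Equiv.swap a b) = id := by
    funext m; exact Equiv.swap_apply_self _ _ _
  rw [this, Finset.image_id]

noncomputable def eprod (k : ℕ) (iv : Fin k → ℕ) (S : Finset (Fin n)) :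
    MvPolynomial (Fin n) ℚ :=
  ∏ l : Fin k, (∑ T ∈ S.powersetCard (l.1 + 1), ∏ m ∈ T, X m) ^ (iv l)

lemma subst_esym (a b : Fin n) (c : ℕ) (S : Finset (Fin n)) :
    subst a b (∑ T ∈ (S.image (Equiv.swap a b)).powersetCard c, ∏ m ∈ T, X m) =
    subst a b (∑ T ∈ S.powersetCard c, ∏ m ∈ T, X m) := by
  rw [map_sum, map_sum]
  refine Finset.sum_nbij' (fun T => T.image (Equiv.swap a b))
    (fun T => T.image (Equiv.swap a b)) ?_ ?_ ?_ ?_ ?_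
  · intro T hT
    rw [mem_powersetCard] at hT ⊢
    refine ⟨?_, by rw [card_image_of_injective _ (Equiv.injective _)]; exact hT.2⟩
    calc T.image (Equiv.swap a b) ⊆ (S.image (Equiv.swap a b)).image (Equiv.swap a b) :=
        Finset.image_subset_image hT.1
      _ = S := image_swap_image S
  · intro T hT
    rw [mem_powersetCard] at hT ⊢
    refine ⟨?_, by rw [card_image_of_injective _ (Equiv.injective _)]; exact hT.2⟩
    exact Finset.image_subset_image hT.1
  · intro T _; exact image_swap_image T
  · intro T _; exact image_swap_image T
  · intro T _
    rw [map_prod, map_prod,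
      Finset.prod_image (fun x _ y _ h => Equiv.injective (Equiv.swap a b) h)]
    apply Finset.prod_congr rfl
    intro m _
    exact (subst_X_swap a b m).symm

lemma subst_eprod (a b : Fin n) (k : ℕ) (iv : Fin k → ℕ) (S : Finset (Fin n)) :
    subst a b (eprod k iv (S.image (Equiv.swap a b))) = subst a b (eprod k iv S) := by
  rw [eprod, eprod, map_prod, map_prod]
  apply Finset.prod_congr rfl
  intro l _
  rw [map_pow, map_pow, subst_esym]

lemma lin_def (u v : Fin n) : lin (u, v) = X v - X u := rfl

lemma lin_swap (a b : Fin n) (p : Fin n × Fin n) :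
    subst a b (lin (Equiv.swap a b p.1, Equiv.swap a b p.2)) = subst a b (lin p) := by
  simp only [lin, map_sub]
  rw [subst_X_swap, subst_X_swap]

lemma crossE (a b : Fin n) (hab : a ≠ b) (k : ℕ) (iv : Fin k → ℕ) (S : Finset (Fin n))
    (haS : a ∈ S) (hbS : b ∉ S) :
    subst a b (eprod k iv S * co S) +
      subst a b (eprod k iv (S.image (Equiv.swap a b)) * co (S.image (Equiv.swap a b))) = 0 := by
  have haS' : a ∉ S.image (Equiv.swap a b) := by
    rw [mem_image_swap, Equiv.swap_apply_left]
    exact hbS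
  have hbS' : b ∈ S.image (Equiv.swap a b) := by
    rw [mem_image_swap, Equiv.swap_apply_right]
    exact haS
  have hmem : (a, b) ∈ S ×ˢ (univ \ S) := by
    rw [mem_product, mem_sdiff]; exact ⟨haS, mem_univ _, hbS⟩
  have hmem' : (b, a) ∈ (S.image (Equiv.swap a b)) ×ˢ (univ \ S.image (Equiv.swap a b)) := by
    rw [mem_product, mem_sdiff]; exact ⟨hbS', mem_univ _, haS'⟩
  have hDE : denom S = lin (a, b) * ∏ p ∈ (S ×ˢ (univ \ S)).erase (a, b), lin p :=
    (Finset.mul_prod_erase _ _ hmem).symm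
  have hDE' : denom (S.image (Equiv.swap a b)) = lin (b, a) *
      ∏ p ∈ ((S.image (Equiv.swap a b)) ×ˢ (univ \ S.image (Equiv.swap a b))).erase (b, a), lin p :=
    (Finset.mul_prod_erase _ _ hmem').symm
  have hEE' : subst a b (∏ p ∈ (S ×ˢ (univ \ S)).erase (a, b), lin p) =
      subst a b (∏ p ∈ ((S.image (Equiv.swap a b)) ×ˢ
        (univ \ S.image (Equiv.swap a b))).erase (b, a), lin p) := by
    rw [map_prod, map_prod]
    refine Finset.prod_nbij' (fun p => (Equiv.swap a b p.1, Equiv.swap a b p.2))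
      (fun p => (Equiv.swap a b p.1, Equiv.swap a b p.2)) ?_ ?_ ?_ ?_ ?_
    · intro p hp
      rw [mem_erase, mem_product, mem_sdiff] at hp
      obtain ⟨hpne, h1, _, h2⟩ := hp
      rw [mem_erase, mem_product, mem_sdiff]
      refine ⟨?_, ?_, mem_univ _, ?_⟩
      · intro e
        apply hpne
        have e1 : Equiv.swap a b p.1 = b := congrArg Prod.fst e
        have e2 : Equiv.swap a b p.2 = a := congrArg Prod.snd e
        have : p.1 = a := by
          have := congrArg (Equiv.swap a b) e1
          rwa [Equiv.swap_apply_self, Equiv.swap_apply_right] at this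
        have h2' : p.2 = b := by
          have := congrArg (Equiv.swap a b) e2
          rwa [Equiv.swap_apply_self, Equiv.swap_apply_left] at this
        exact Prod.ext this h2'
      · rw [mem_image_swap, Equiv.swap_apply_self]
        exact h1
      · rw [mem_image_swap, Equiv.swap_apply_self]
        exact h2
    · intro p hp
      rw [mem_erase, mem_product, mem_sdiff] at hp
      obtain ⟨hpne, h1, _, h2⟩ := hp
      rw [mem_erase, mem_product, mem_sdiff]
      rw [mem_image_swap] at h1
      rw [mem_image_swap] at h2
      refine ⟨?_, h1, mem_univ _, h2⟩
      intro e
      apply hpne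
      have e1 : Equiv.swap a b p.1 = a := congrArg Prod.fst e
      have e2 : Equiv.swap a b p.2 = b := congrArg Prod.snd e
      have h1' : p.1 = b := by
        have := congrArg (Equiv.swap a b) e1
        rwa [Equiv.swap_apply_self, Equiv.swap_apply_left] at this
      have h2' : p.2 = a := by
        have := congrArg (Equiv.swap a b) e2
        rwa [Equiv.swap_apply_self, Equiv.swap_apply_right] at this
      exact Prod.ext h1' h2'
    · intro p _
      simp only [Equiv.swap_apply_self]
    · intro p _
      simp only [Equiv.swap_apply_self]
    · intro p _
      exact (lin_swap a b p).symm
  have hEne : subst a b (∏ p ∈ (S ×ˢ (univ \ S)).erase (a, b), lin p) ≠ 0 := by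
    rw [map_prod, Finset.prod_ne_zero_iff]
    intro p hp
    rw [mem_erase, mem_product, mem_sdiff] at hp
    obtain ⟨hpne, h1, _, h2⟩ := hp
    rw [lin, map_sub, subst_X, subst_X]
    rcases eq_or_ne p.1 a with h1a | h1a
    · rw [if_pos h1a]
      have h2a : p.2 ≠ a := fun e => h2 (e ▸ haS)
      rw [if_neg h2a]
      refine X_sub_X_ne_zero (fun e => ?_)
      exact hpne (Prod.ext h1a e.symm)
    · rw [if_neg h1a]
      rcases eq_or_ne p.2 a with h2a | h2a
      · exact absurd (h2a ▸ haS) h2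
      · rw [if_neg h2a]
        refine X_sub_X_ne_zero (fun e => ?_)
        exact h2 (e ▸ h1)
  have hlinne : lin (a, b) ≠ 0 := by
    rw [lin_def]
    exact X_sub_X_ne_zero hab
  have hkey : (∏ p ∈ (S ×ˢ (univ \ S)).erase (a, b), lin p) * co S =
      -((∏ p ∈ ((S.image (Equiv.swap a b)) ×ˢ
        (univ \ S.image (Equiv.swap a b))).erase (b, a), lin p) *
        co (S.image (Equiv.swap a b))) := by
    have hv : denom S * co S = denom (S.image (Equiv.swap a b)) * co (S.image (Equiv.swap a b)) := by
      rw [denom_mul_co, denom_mul_co]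
    rw [hDE, hDE'] at hv
    have hba : lin (b, a) = -lin (a, b) := by rw [lin_def, lin_def]; ring
    rw [hba] at hv
    apply mul_left_cancel₀ hlinne
    linear_combination hv
  have hco : subst a b (co S) + subst a b (co (S.image (Equiv.swap a b))) = 0 := by
    have h2 : (∏ p ∈ (S ×ˢ (univ \ S)).erase (a, b), lin p) * co S +
        (∏ p ∈ ((S.image (Equiv.swap a b)) ×ˢ
          (univ \ S.image (Equiv.swap a b))).erase (b, a), lin p) *
          co (S.image (Equiv.swap a b)) = 0 := by
      rw [hkey]; ring
    have h3 := congrArg (subst a b) h2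
    rw [map_add, map_mul, map_mul, map_zero, ← hEE'] at h3
    have h4 : subst a b (∏ p ∈ (S ×ˢ (univ \ S)).erase (a, b), lin p) *
        (subst a b (co S) + subst a b (co (S.image (Equiv.swap a b)))) = 0 := by
      linear_combination h3
    rcases mul_eq_zero.mp h4 with h | h
    · exact absurd h hEne
    · exact h
  rw [map_mul, map_mul, subst_eprod a b k iv S]
  linear_combination (subst a b (eprod k iv S)) * hco

lemma subst_co_sameside (a b : Fin n) (hab : a < b) (S : Finset (Fin n))
    (h : a ∈ S ↔ b ∈ S) : subst a b (co S) = 0 := by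
  have hmem : (a, b) ∈ (SP n).filter (fun p => ¬ cross S p) := by
    rw [mem_filter, SP, mem_filter]
    refine ⟨⟨mem_univ _, hab⟩, ?_⟩
    rintro (⟨h1, h2⟩ | ⟨h1, h2⟩)
    · exact h2 (h.mp h1)
    · exact h2 (h.mpr h1)
  have hz : ∏ p ∈ (SP n).filter (fun p => ¬ cross S p), subst a b (lin p) = 0 := by
    refine Finset.prod_eq_zero hmem ?_
    rw [lin_def, map_sub, subst_X, subst_X, if_pos rfl, if_neg (ne_of_gt hab), sub_self]
  rw [co, map_mul, map_prod, map_prod, hz, mul_zero]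

lemma image_swap_self (a b : Fin n) (S : Finset (Fin n)) (h : a ∈ S ↔ b ∈ S) :
    S.image (Equiv.swap a b) = S := by
  ext m
  rw [mem_image_swap]
  rcases eq_or_ne m a with rfl | hma
  · rw [Equiv.swap_apply_left]
    exact h.symm
  · rcases eq_or_ne m b with rfl | hmb
    · rw [Equiv.swap_apply_right]
      exact h
    · rw [Equiv.swap_apply_of_ne_of_ne hma hmb]

noncomputable def num (n k : ℕ) (iv : Fin k → ℕ) : MvPolynomial (Fin n) ℚ :=
  ∑ S ∈ powersetCard k (univ : Finset (Fin n)), eprod k iv S * co S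

lemma subst_num (a b : Fin n) (hab : a < b) (k : ℕ) (iv : Fin k → ℕ) :
    subst a b (num n k iv) = 0 := by
  have hab' : a ≠ b := ne_of_lt hab
  rw [num, map_sum]
  refine Finset.sum_involution (fun S _ => S.image (Equiv.swap a b)) ?_ ?_ ?_ ?_
  · intro S _
    by_cases haS : a ∈ S
    · by_cases hbS : b ∈ S
      · rw [image_swap_self a b S (by tauto)]
        have h0 : subst a b (eprod k iv S * co S) = 0 := by
          rw [map_mul, subst_co_sameside a b hab S (by tauto), mul_zero]
        rw [h0, add_zero]
      · exact crossE a b hab' k iv S haS hbS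
    · by_cases hbS : b ∈ S
      · have h1 := crossE a b hab' k iv (S.image (Equiv.swap a b))
          (by rw [mem_image_swap, Equiv.swap_apply_left]; exact hbS)
          (by rw [mem_image_swap, Equiv.swap_apply_right]; exact haS)
        rw [image_swap_image] at h1
        linear_combination h1
      · rw [image_swap_self a b S (by tauto)]
        have h0 : subst a b (eprod k iv S * co S) = 0 := by
          rw [map_mul, subst_co_sameside a b hab S (by tauto), mul_zero]
        rw [h0, add_zero]
  · intro S _ hne
    intro e
    have e' : S.image (Equiv.swap a b) = S := e
    by_cases haS : a ∈ S
    · by_cases hbS : b ∈ S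
      · exact hne (by rw [map_mul, subst_co_sameside a b hab S (by tauto), mul_zero])
      · have hb : b ∈ S.image (Equiv.swap a b) := by
          rw [mem_image_swap, Equiv.swap_apply_right]; exact haS
        rw [e'] at hb
        exact hbS hb
    · by_cases hbS : b ∈ S
      · have ha : a ∈ S.image (Equiv.swap a b) := by
          rw [mem_image_swap, Equiv.swap_apply_left]; exact hbS
        rw [e'] at ha
        exact haS ha
      · exact hne (by rw [map_mul, subst_co_sameside a b hab S (by tauto), mul_zero])
  · intro S hS
    rw [mem_powersetCard] at hS ⊢
    exact ⟨subset_univ _, by rw [card_image_of_injective _ (Equiv.injective _)]; exact hS.2⟩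
  · intro S _
    exact image_swap_image S

lemma lin_dvd_num (a b : Fin n) (hab : a < b) (k : ℕ) (iv : Fin k → ℕ) :
    (X b - X a : MvPolynomial (Fin n) ℚ) ∣ num n k iv := by
  have h := dvd_sub_subst a b (num n k iv)
  rw [subst_num a b hab, zero_sub] at h
  exact (dvd_neg).mp h

lemma Vmd_dvd_num (k : ℕ) (iv : Fin k → ℕ) : Vmd n ∣ num n k iv := by
  rw [Vmd]
  refine prod_primes_dvd' (SP n) lin ?_ ?_ (num n k iv) ?_
  · intro p hp
    rw [SP, mem_filter] at hp
    exact prime_lin p.1 p.2 (ne_of_lt hp.2)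
  · intro p hp q hq hpq hdvd
    rw [SP, mem_filter] at hp hq
    obtain ⟨u, hu⟩ := hdvd
    have h0 := congrArg (subst p.1 p.2) hu
    have e1 : subst p.1 p.2 (X p.1) = X p.2 := by rw [subst_X, if_pos rfl]
    have e2 : subst p.1 p.2 (X p.2) = X p.2 := by rw [subst_X, if_neg (ne_of_gt hp.2)]
    rw [lin, lin, map_mul, map_sub, map_sub, e1, e2, subst_X, subst_X, sub_self,
      zero_mul] at h0
    have hne : (if q.2 = p.1 then (X p.2 : MvPolynomial (Fin n) ℚ) else X q.2) -
        (if q.1 = p.1 then X p.2 else X q.1) ≠ 0 := by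
      rcases eq_or_ne q.1 p.1 with f1 | f1
      · rw [if_pos f1]
        have hq2 : q.2 ≠ p.1 := by
          intro e
          rw [f1, ← e] at hq
          exact lt_irrefl _ hq.2
        rw [if_neg hq2]
        refine X_sub_X_ne_zero (fun e => ?_)
        exact hpq (Prod.ext f1 e.symm).symm
      · rw [if_neg f1]
        rcases eq_or_ne q.2 p.1 with f2 | f2
        · rw [if_pos f2]
          refine X_sub_X_ne_zero (fun e => ?_)
          have h1 : q.1 < q.2 := hq.2
          rw [e, f2] at h1
          exact absurd h1 (not_lt_of_gt hp.2)
        · rw [if_neg f2]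
          exact X_sub_X_ne_zero (ne_of_lt hq.2)
    exact hne h0
  · intro p hp
    rw [SP, mem_filter] at hp
    exact lin_dvd_num p.1 p.2 hp.2 k iv

lemma denom_ne_zero (S : Finset (Fin n)) : denom S ≠ 0 := by
  rw [denom, Finset.prod_ne_zero_iff]
  intro p hp
  rw [mem_product, mem_sdiff] at hp
  exact X_sub_X_ne_zero (fun e => hp.2.2 (e ▸ hp.1))

lemma Vmd_ne_zero : Vmd n ≠ 0 := by
  rw [Vmd, Finset.prod_ne_zero_iff]
  intro p hp
  rw [SP, mem_filter] at hp
  exact X_sub_X_ne_zero (ne_of_lt hp.2)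


/-- The ABBV localization sum for the equivariant Chern number `∫_{G_k(ℂⁿ)} (c^T)^I`:
`Σ_{S∈𝒮} (∏_{l=1}^k e_l((αᵢ)_{i∈S})^{i_l}) / (∏_{i∈S} ∏_{j∉S} (αⱼ − αᵢ))` in the
fraction field of `ℚ[α₁,…,αₙ]`. -/
noncomputable def chernLocSum (n k : ℕ) (i : Fin k → ℕ) :
    FractionRing (MvPolynomial (Fin n) ℚ) :=
  ∑ S ∈ Finset.powersetCard k (Finset.univ : Finset (Fin n)),
    (algebraMap (MvPolynomial (Fin n) ℚ) (FractionRing (MvPolynomial (Fin n) ℚ))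
      (∏ l : Fin k, (∑ T ∈ S.powersetCard (l.1 + 1), ∏ m ∈ T, X m) ^ (i l))) /
    (algebraMap (MvPolynomial (Fin n) ℚ) (FractionRing (MvPolynomial (Fin n) ℚ))
      (∏ a ∈ S, ∏ b ∈ Finset.univ \ S, (X b - X a)))

/-- the ABBV localization sum for equivariant Chern numbers of the complex
Grassmannian is a polynomial, i.e. lies in the image of `ℚ[α₁,…,αₙ]` in its fraction
field. -/
theorem equivariant_chern_number_is_polynomial (n k : ℕ) (hk : k ≤ n) (i : Fin k → ℕ) :
    chernLocSum n k i ∈ Set.range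
      (algebraMap (MvPolynomial (Fin n) ℚ) (FractionRing (MvPolynomial (Fin n) ℚ))) := by
  obtain ⟨c, hc⟩ := Vmd_dvd_num (n := n) k i
  refine ⟨c, ?_⟩
  have hinj : Function.Injective
      (algebraMap (MvPolynomial (Fin n) ℚ) (FractionRing (MvPolynomial (Fin n) ℚ))) :=
    IsFractionRing.injective _ _
  have hV : algebraMap (MvPolynomial (Fin n) ℚ) (FractionRing (MvPolynomial (Fin n) ℚ))
      (Vmd n) ≠ 0 := fun h => Vmd_ne_zero (hinj (by rw [h, map_zero]))
  have key : chernLocSum n k i =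
      algebraMap (MvPolynomial (Fin n) ℚ) (FractionRing (MvPolynomial (Fin n) ℚ)) (num n k i) /
      algebraMap (MvPolynomial (Fin n) ℚ) (FractionRing (MvPolynomial (Fin n) ℚ)) (Vmd n) := by
    rw [chernLocSum, num, map_sum, Finset.sum_div]
    refine Finset.sum_congr rfl ?_
    intro S _
    have hd : (∏ a ∈ S, ∏ b ∈ univ \ S, (X b - X a : MvPolynomial (Fin n) ℚ)) = denom S := by
      rw [denom, Finset.prod_product]
      simp only [lin]
    rw [hd]
    have hdne : algebraMap (MvPolynomial (Fin n) ℚ) (FractionRing (MvPolynomial (Fin n) ℚ))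
        (denom S) ≠ 0 := fun h => denom_ne_zero S (hinj (by rw [h, map_zero]))
    rw [div_eq_div_iff hdne hV, ← map_mul, ← map_mul]
    congr 1
    rw [← denom_mul_co S, eprod]
    ring
  rw [key, hc, map_mul]
  exact (mul_div_cancel_left₀ _ hV).symm
end

section
/- Fix integers 0 ≤ k ≤ n and a tuple of nonnegative integers (i₁,…,i_k), and let Σ denote the element Σ_{S∈𝒮} ( ∏_{l=1}^{k} e_l((αᵢ)_{i∈S})^{i_l} ) / ( ∏_{i∈S} ∏_{j∉S} (αⱼ − αᵢ) ) of the fraction field of ℚ[α₁,…,αₙ], the sum being over all k-element subsets S of {1,…,n}. If i₁ + 2i₂ + ⋯ + k·i_k < k(n−k) then Σ = 0, and if i₁ + 2i₂ + ⋯ + k·i_k = k(n−k) then Σ is a constant, i.e. Σ is the image of a rational number under the embedding ℚ ↪ Frac(ℚ[α₁,…,αₙ]). -/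
open MvPolynomial Finset

namespace ChernAux

set_option maxHeartbeats 1000000

noncomputable section

abbrev Rn (n : ℕ) := MvPolynomial (Fin n) ℚ

variable {n : ℕ}

lemma X_sub_X_ne_zero {a b : Fin n} (h : a ≠ b) : (X b - X a : Rn n) ≠ 0 := by
  intro hz
  have := congrArg (MvPolynomial.coeff (Finsupp.single b 1)) hz
  rw [MvPolynomial.coeff_sub, MvPolynomial.coeff_X, MvPolynomial.coeff_X'] at this
  rw [if_neg (show ¬ (Finsupp.single a 1 = Finsupp.single b 1) by simp [Finsupp.single_eq_single_iff, h])] at this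
  simp at this

/-- substitution `X c ↦ X d`. -/
def sb (c d : Fin n) : Rn n →ₐ[ℚ] Rn n := aeval (fun x => if x = c then X d else X x)

lemma sb_X_c (c d : Fin n) : sb c d (X c) = X d := by simp [sb]

lemma sb_X_ne (c d : Fin n) {x : Fin n} (h : x ≠ c) : sb c d (X x) = X x := by simp [sb, h]

lemma dvd_sub_sb (c d : Fin n) (p : Rn n) : (X c - X d : Rn n) ∣ (p - sb c d p) := by
  induction p using MvPolynomial.induction_on with
  | C a => simp [sb]
  | add p q hp hq =>
      have : p + q - sb c d (p + q) = (p - sb c d p) + (q - sb c d q) := by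
        rw [map_add]; ring
      rw [this]; exact dvd_add hp hq
  | mul_X p j hp =>
      rw [map_mul]
      have : p * X j - sb c d p * sb c d (X j)
          = (p - sb c d p) * X j + sb c d p * (X j - sb c d (X j)) := by ring
      rw [this]
      refine dvd_add (hp.mul_right _) (Dvd.dvd.mul_left ?_ _)
      by_cases hj : j = c
      · subst hj; rw [sb_X_c]
      · rw [sb_X_ne c d hj]; simp

lemma sb_eq_zero_iff (c d : Fin n) (hcd : c ≠ d) (p : Rn n) :
    sb c d p = 0 ↔ (X d - X c : Rn n) ∣ p := by
  constructor
  · intro h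
    have h1 : (X c - X d : Rn n) ∣ p := by simpa [h] using dvd_sub_sb c d p
    simpa [neg_sub] using h1.neg_left
  · rintro ⟨h, rfl⟩
    rw [map_mul]
    have : sb c d (X d - X c) = 0 := by
      rw [map_sub, sb_X_c, sb_X_ne c d (Ne.symm hcd), sub_self]
    rw [this, zero_mul]

lemma prime_X_sub_X (c d : Fin n) (hcd : c ≠ d) : Prime (X d - X c : Rn n) := by
  constructor
  · exact X_sub_X_ne_zero hcd
  constructor
  · intro hu
    have h1 : (X d - X c : Rn n) ∣ 1 := hu.dvd
    obtain ⟨u, hu1⟩ := h1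
    have := congrArg (MvPolynomial.eval (fun _ => (0 : ℚ))) hu1
    simp at this
  · intro a b hab
    rw [← sb_eq_zero_iff c d hcd] at hab ⊢
    rw [← sb_eq_zero_iff c d hcd]
    rw [map_mul] at hab
    exact mul_eq_zero.mp hab

/-- ordered pairs (a,b) with a < b -/
def pairs (n : ℕ) : Finset (Fin n × Fin n) :=
  (Finset.univ ×ˢ Finset.univ).filter (fun p => p.1 < p.2)

/-- Vandermonde product -/
def V (n : ℕ) : Rn n := ∏ p ∈ pairs n, (X p.2 - X p.1)

lemma V_eq_det : V n = (Matrix.vandermonde (fun i : Fin n => (X i : Rn n))).det := by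
  rw [Matrix.det_vandermonde, V, pairs, Finset.prod_filter]
  rw [Finset.prod_product' (f := fun a b => if a < b then (X b - X a : Rn n) else 1)]
  refine Finset.prod_congr rfl fun a _ => ?_
  rw [← Finset.prod_filter]
  congr 1
  ext j
  simp [Finset.mem_Ioi]

lemma V_ne_zero : V n ≠ 0 := by
  rw [V]
  refine Finset.prod_ne_zero_iff.mpr fun p hp => ?_
  rw [pairs, Finset.mem_filter] at hp
  exact X_sub_X_ne_zero (ne_of_lt hp.2)

/-- denominator -/
def D (S : Finset (Fin n)) : Rn n := ∏ a ∈ S, ∏ b ∈ Finset.univ \ S, (X b - X a)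

lemma D_ne_zero (S : Finset (Fin n)) : D S ≠ 0 := by
  rw [D]
  refine Finset.prod_ne_zero_iff.mpr fun a ha => ?_
  refine Finset.prod_ne_zero_iff.mpr fun b hb => ?_
  rw [Finset.mem_sdiff] at hb
  exact X_sub_X_ne_zero (fun h => hb.2 (h ▸ ha))

/-- separated pairs -/
def sep (S : Finset (Fin n)) : Finset (Fin n × Fin n) :=
  (pairs n).filter (fun p => ¬ ((p.1 ∈ S) ↔ (p.2 ∈ S)))

lemma prod_sign_absorb {ι : Type*} (s : Finset ι) (f g : ι → Rn n)
    (h : ∀ x ∈ s, f x = g x ∨ f x = - g x) :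
    (∏ x ∈ s, f x = ∏ x ∈ s, g x) ∨ (∏ x ∈ s, f x = - ∏ x ∈ s, g x) := by
  classical
  induction s using Finset.cons_induction with
  | empty => simp
  | cons a s ha ih =>
      rw [Finset.prod_cons, Finset.prod_cons]
      rcases ih (fun x hx => h x (Finset.mem_cons_of_mem hx)) with h1 | h1 <;>
        rcases h a (Finset.mem_cons_self a s) with h2 | h2 <;>
          rw [h1, h2] <;> [left; right; right; left] <;> ring

lemma D_eq_sep_prod (S : Finset (Fin n)) :
    D S = ∏ p ∈ sep S, (if p.1 ∈ S then (X p.2 - X p.1 : Rn n) else (X p.1 - X p.2)) := by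
  rw [D, ← Finset.prod_product']
  refine Finset.prod_nbij' (fun p => if p.1 < p.2 then p else (p.2, p.1))
    (fun p => if p.1 ∈ S then p else (p.2, p.1)) ?_ ?_ ?_ ?_ ?_
  · -- maps into sep S
    rintro ⟨a, b⟩ hab
    rw [Finset.mem_product, Finset.mem_sdiff] at hab
    obtain ⟨haS, -, hbS⟩ := hab
    dsimp only at haS hbS ⊢
    have hne : a ≠ b := fun h => hbS (h ▸ haS)
    rcases lt_or_gt_of_ne hne with h | h
    · rw [if_pos h]
      simp only [sep, pairs, Finset.mem_filter, Finset.mem_product]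
      exact ⟨⟨⟨Finset.mem_univ _, Finset.mem_univ _⟩, h⟩, by simp [haS, hbS]⟩
    · rw [if_neg (not_lt.mpr h.le)]
      simp only [sep, pairs, Finset.mem_filter, Finset.mem_product]
      exact ⟨⟨⟨Finset.mem_univ _, Finset.mem_univ _⟩, h⟩, by simp [haS, hbS]⟩
  · -- maps back
    rintro ⟨a, b⟩ hab
    simp only [sep, pairs, Finset.mem_filter, Finset.mem_product] at hab
    obtain ⟨⟨-, hlt⟩, hxor⟩ := hab
    dsimp only at hxor hlt ⊢
    by_cases haS : a ∈ S
    · have hbS : b ∉ S := fun hb => hxor ⟨fun _ => hb, fun _ => haS⟩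
      rw [if_pos haS]
      exact Finset.mem_product.mpr ⟨haS, Finset.mem_sdiff.mpr ⟨Finset.mem_univ _, hbS⟩⟩
    · have hbS : b ∈ S := by tauto
      rw [if_neg haS]
      exact Finset.mem_product.mpr ⟨hbS, Finset.mem_sdiff.mpr ⟨Finset.mem_univ _, haS⟩⟩
  · -- left inverse
    rintro ⟨a, b⟩ hab
    rw [Finset.mem_product, Finset.mem_sdiff] at hab
    obtain ⟨haS, -, hbS⟩ := hab
    dsimp only at haS hbS ⊢
    have hne : a ≠ b := fun h => hbS (h ▸ haS)
    rcases lt_or_gt_of_ne hne with h | h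
    · rw [if_pos h, if_pos haS]
    · rw [if_neg (not_lt.mpr h.le)]
      simp only
      rw [if_neg hbS]
  · -- right inverse
    rintro ⟨a, b⟩ hab
    simp only [sep, pairs, Finset.mem_filter, Finset.mem_product] at hab
    obtain ⟨⟨-, hlt⟩, hxor⟩ := hab
    dsimp only at hxor hlt ⊢
    by_cases haS : a ∈ S
    · rw [if_pos haS, if_pos hlt]
    · rw [if_neg haS]
      simp only
      rw [if_neg (not_lt.mpr hlt.le)]
  · -- factors agree
    rintro ⟨a, b⟩ hab
    rw [Finset.mem_product, Finset.mem_sdiff] at hab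
    obtain ⟨haS, -, hbS⟩ := hab
    dsimp only at haS hbS ⊢
    have hne : a ≠ b := fun h => hbS (h ▸ haS)
    rcases lt_or_gt_of_ne hne with h | h
    · rw [if_pos h]
      simp only
      rw [if_pos haS]
    · rw [if_neg (not_lt.mpr h.le)]
      simp only
      rw [if_neg hbS]

lemma D_dvd_V (S : Finset (Fin n)) : D S ∣ V n := by
  have h1 := D_eq_sep_prod S
  have h2 := prod_sign_absorb (sep S)
    (fun p => if p.1 ∈ S then (X p.2 - X p.1 : Rn n) else (X p.1 - X p.2))
    (fun p => (X p.2 - X p.1 : Rn n)) ?_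
  · have hsub : sep S ⊆ pairs n := Finset.filter_subset _ _
    have hdvd : (∏ p ∈ sep S, (X p.2 - X p.1 : Rn n)) ∣ V n :=
      Finset.prod_dvd_prod_of_subset _ _ _ hsub
    rcases h2 with h2 | h2
    · rw [h1, h2]; exact hdvd
    · rw [h1, h2]; exact (neg_dvd.mpr hdvd)
  · intro p hp
    by_cases h : p.1 ∈ S
    · left; simp [h]
    · right; simp [h]

lemma exQ (S : Finset (Fin n)) : ∃ q : Rn n, V n = D S * q := D_dvd_V S

/-- quotient `V / D S` -/
def Q (S : Finset (Fin n)) : Rn n := (exQ S).choose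

lemma D_mul_Q (S : Finset (Fin n)) : D S * Q S = V n := (exQ S).choose_spec.symm

lemma Q_ne_zero (S : Finset (Fin n)) : Q S ≠ 0 := by
  intro h
  have := D_mul_Q S
  rw [h, mul_zero] at this
  exact V_ne_zero this.symm

lemma rename_D (σ : Equiv.Perm (Fin n)) (S : Finset (Fin n)) :
    rename σ (D S) = D (S.image σ) := by
  rw [D, map_prod, D]
  rw [Finset.prod_image (fun a _ b _ h => σ.injective h)]
  refine Finset.prod_congr rfl fun a _ => ?_
  rw [map_prod]
  have himg : (Finset.univ \ S).image σ = Finset.univ \ S.image σ := by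
    rw [Finset.image_sdiff _ _ σ.injective]
    congr 1
    exact Finset.image_univ_equiv σ
  rw [← himg, Finset.prod_image (fun a _ b _ h => σ.injective h)]
  refine Finset.prod_congr rfl fun b _ => ?_
  rw [map_sub, rename_X, rename_X]

lemma V_eq_Ioi : V n = ∏ i : Fin n, ∏ j ∈ Finset.Ioi i, (X j - X i : Rn n) :=
  V_eq_det.trans (Matrix.det_vandermonde _)

lemma rename_V_swap {c d : Fin n} (hcd : c ≠ d) :
    rename (Equiv.swap c d) (V n) = - V n := by
  have h1 : rename (Equiv.swap c d) (V n)
      = (Matrix.vandermonde (fun i : Fin n => (X (Equiv.swap c d i) : Rn n))).det := by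
    rw [V_eq_Ioi, map_prod, Matrix.det_vandermonde]
    refine Finset.prod_congr rfl fun a _ => ?_
    rw [map_prod]
    refine Finset.prod_congr rfl fun b _ => ?_
    rw [map_sub, rename_X, rename_X]
  have h2 : (Matrix.vandermonde (fun i : Fin n => (X (Equiv.swap c d i) : Rn n)))
      = (Matrix.vandermonde (fun i : Fin n => (X i : Rn n))).submatrix (Equiv.swap c d) id := by
    ext a b
    simp [Matrix.vandermonde]
  rw [h1, h2, Matrix.det_permute, Equiv.Perm.sign_swap hcd, ← V_eq_det]
  simp

lemma rename_Q_swap {c d : Fin n} (hcd : c ≠ d) (S : Finset (Fin n)) :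
    rename (Equiv.swap c d) (Q S) = - Q (S.image (Equiv.swap c d)) := by
  have h1 : D (S.image (Equiv.swap c d)) * rename (Equiv.swap c d) (Q S) = - V n := by
    rw [← rename_D, ← map_mul, D_mul_Q, rename_V_swap hcd]
  have h2 : D (S.image (Equiv.swap c d)) * (- Q (S.image (Equiv.swap c d))) = - V n := by
    rw [mul_neg, D_mul_Q]
  exact mul_left_cancel₀ (D_ne_zero _) (h1.trans h2.symm)

lemma sb_rename_swap {c d : Fin n} (hcd : c ≠ d) (p : Rn n) :
    sb c d (rename (Equiv.swap c d) p) = sb c d p := by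
  conv_lhs => rw [sb, aeval_rename]
  rw [sb]
  have : ((fun x => if x = c then (X d : Rn n) else X x) ∘ (Equiv.swap c d))
      = (fun x => if x = c then (X d : Rn n) else X x) := by
    funext x
    simp only [Function.comp]
    rcases eq_or_ne x c with rfl | hxc
    · simp [Equiv.swap_apply_left, hcd.symm, Ne.symm hcd]
    · rcases eq_or_ne x d with rfl | hxd
      · simp [Equiv.swap_apply_right, hxc]
      · simp [Equiv.swap_apply_of_ne_of_ne hxc hxd, hxc]
  rw [this]

/-- the characteristic class polynomial -/
def P (k : ℕ) (iv : Fin k → ℕ) (S : Finset (Fin n)) : Rn n :=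
  ∏ l : Fin k, (∑ T ∈ S.powersetCard (l.1 + 1), ∏ m ∈ T, X m) ^ (iv l)

lemma rename_P (σ : Equiv.Perm (Fin n)) (k : ℕ) (iv : Fin k → ℕ) (S : Finset (Fin n)) :
    rename σ (P k iv S) = P k iv (S.image σ) := by
  rw [P, map_prod, P]
  refine Finset.prod_congr rfl fun l _ => ?_
  rw [map_pow]
  congr 1
  rw [map_sum]
  have : S.image σ = S.map ⟨σ, σ.injective⟩ := by
    rw [Finset.map_eq_image]; rfl
  rw [this, Finset.powersetCard_map, Finset.sum_map]
  refine Finset.sum_congr rfl fun T _ => ?_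
  rw [map_prod]
  rw [show (Finset.mapEmbedding (⟨σ, σ.injective⟩ : Fin n ↪ Fin n)).toEmbedding T
      = T.map ⟨σ, σ.injective⟩ by rw [RelEmbedding.coe_toEmbedding, Finset.mapEmbedding_apply]]
  rw [Finset.prod_map]
  refine Finset.prod_congr rfl fun m _ => ?_
  rw [rename_X]
  rfl

/-- grading map: `X i ↦ C (X i) * T` -/
def Phi (n : ℕ) : Rn n →ₐ[ℚ] Polynomial (Rn n) :=
  aeval (fun i => Polynomial.C (X i) * Polynomial.X)

/-- `p` is homogeneous of degree `m` -/
def IsHom (m : ℕ) (p : Rn n) : Prop := Phi n p = Polynomial.C p * Polynomial.X ^ m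

lemma isHom_zero (m : ℕ) : IsHom m (0 : Rn n) := by simp [IsHom]

lemma isHom_X (i : Fin n) : IsHom 1 (X i : Rn n) := by simp [IsHom, Phi]

lemma IsHom.mul {m₁ m₂ : ℕ} {p q : Rn n} (h₁ : IsHom m₁ p) (h₂ : IsHom m₂ q) :
    IsHom (m₁ + m₂) (p * q) := by
  unfold IsHom at *
  rw [map_mul, h₁, h₂, map_mul, pow_add]
  ring

lemma IsHom.add {m : ℕ} {p q : Rn n} (h₁ : IsHom m p) (h₂ : IsHom m q) :
    IsHom m (p + q) := by
  unfold IsHom at *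
  rw [map_add, h₁, h₂, map_add]
  ring

lemma IsHom.sub {m : ℕ} {p q : Rn n} (h₁ : IsHom m p) (h₂ : IsHom m q) :
    IsHom m (p - q) := by
  unfold IsHom at *
  rw [map_sub, h₁, h₂, map_sub]
  ring

lemma isHom_one : IsHom 0 (1 : Rn n) := by simp [IsHom]

lemma isHom_prod {ι : Type*} (s : Finset ι) (f : ι → Rn n) (m : ι → ℕ)
    (h : ∀ x ∈ s, IsHom (m x) (f x)) :
    IsHom (∑ x ∈ s, m x) (∏ x ∈ s, f x) := by
  classical
  induction s using Finset.cons_induction with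
  | empty => simpa using isHom_one
  | cons a s ha ih =>
      rw [Finset.prod_cons, Finset.sum_cons]
      exact (h a (Finset.mem_cons_self a s)).mul
        (ih (fun x hx => h x (Finset.mem_cons_of_mem hx)))

lemma isHom_sum {ι : Type*} (s : Finset ι) (f : ι → Rn n) (m : ℕ)
    (h : ∀ x ∈ s, IsHom m (f x)) :
    IsHom m (∑ x ∈ s, f x) := by
  classical
  induction s using Finset.cons_induction with
  | empty => simpa using isHom_zero m
  | cons a s ha ih =>
      rw [Finset.sum_cons]
      exact (h a (Finset.mem_cons_self a s)).add
        (ih (fun x hx => h x (Finset.mem_cons_of_mem hx)))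

lemma IsHom.pow {m : ℕ} {p : Rn n} (h : IsHom m p) (t : ℕ) : IsHom (m * t) (p ^ t) := by
  unfold IsHom at *
  rw [map_pow, h, mul_pow, ← map_pow, ← pow_mul]

lemma isHom_X_sub_X (a b : Fin n) : IsHom 1 ((X b - X a) : Rn n) :=
  (isHom_X b).sub (isHom_X a)

lemma isHom_D (S : Finset (Fin n)) : IsHom (S.card * (Finset.univ \ S).card) (D S) := by
  have := isHom_prod S (fun a => ∏ b ∈ Finset.univ \ S, (X b - X a : Rn n))
    (fun _ => (Finset.univ \ S).card) ?_
  · simpa [Finset.sum_const, smul_eq_mul, D] using this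
  · intro a _
    have := isHom_prod (Finset.univ \ S) (fun b => (X b - X a : Rn n)) (fun _ => 1)
      (fun b _ => isHom_X_sub_X a b)
    simpa [Finset.sum_const, smul_eq_mul] using this

lemma isHom_V : IsHom ((pairs n).card) (V n) := by
  have := isHom_prod (pairs n) (fun p => (X p.2 - X p.1 : Rn n)) (fun _ => 1)
    (fun p _ => isHom_X_sub_X p.1 p.2)
  simpa [Finset.sum_const, smul_eq_mul, V] using this

lemma isHom_P (k : ℕ) (iv : Fin k → ℕ) (S : Finset (Fin n)) :
    IsHom (∑ l : Fin k, (l.1 + 1) * iv l) (P k iv S) := by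
  refine isHom_prod Finset.univ _ (fun l => (l.1 + 1) * iv l) fun l _ => ?_
  refine IsHom.pow ?_ (iv l)
  refine isHom_sum _ _ (l.1 + 1) fun T hT => ?_
  rw [Finset.mem_powersetCard] at hT
  have := isHom_prod T (fun m => (X m : Rn n)) (fun _ => 1) (fun m _ => isHom_X m)
  simpa [Finset.sum_const, smul_eq_mul, hT.2] using this

lemma phi_coeff_zero (p : Rn n) :
    (Phi n p).coeff 0 = MvPolynomial.C (MvPolynomial.coeff 0 p) := by
  induction p using MvPolynomial.induction_on with
  | C a => simp [Phi, algebraMap_eq]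
  | add p q hp hq => rw [map_add, Polynomial.coeff_add, hp, hq, MvPolynomial.coeff_add,
      map_add]
  | mul_X p j hp =>
      rw [map_mul, Polynomial.mul_coeff_zero]
      have h1 : (Phi n (X j)).coeff 0 = 0 := by simp [Phi]
      rw [h1, mul_zero]
      have h2 : MvPolynomial.coeff 0 (p * X j) = 0 := by
        rw [MvPolynomial.coeff_mul_X']
        simp
      rw [h2, map_zero]

lemma isHom_zero_struct {G : Rn n} (h : IsHom 0 G) : ∃ q : ℚ, G = MvPolynomial.C q := by
  refine ⟨MvPolynomial.coeff 0 G, ?_⟩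
  have h1 := phi_coeff_zero G
  rw [h, pow_zero, mul_one, Polynomial.coeff_C_zero] at h1
  exact h1

lemma hom_quot {v e : ℕ} {Vp G : Rn n} (hV : IsHom v Vp) (hV0 : Vp ≠ 0)
    (hN : IsHom e (Vp * G)) :
    (e < v → G = 0) ∧ (v ≤ e → IsHom (e - v) G) := by
  have hkey : Polynomial.X ^ v * Phi n G = Polynomial.C G * Polynomial.X ^ e := by
    have h1 : Phi n (Vp * G) = Polynomial.C Vp * Polynomial.X ^ v * Phi n G := by
      rw [map_mul, hV]
    have h2 : Polynomial.C Vp * Polynomial.X ^ v * Phi n G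
        = Polynomial.C Vp * (Polynomial.C G * Polynomial.X ^ e) := by
      rw [← h1, hN, map_mul]
      ring
    have hCV : (Polynomial.C Vp : Polynomial (Rn n)) ≠ 0 := by
      simpa [Polynomial.C_eq_zero] using hV0
    have h3 : Polynomial.C Vp * (Polynomial.X ^ v * Phi n G)
        = Polynomial.C Vp * (Polynomial.C G * Polynomial.X ^ e) := by
      rw [← h2]
      ring
    exact mul_left_cancel₀ hCV h3
  constructor
  · intro hlt
    have h3 : Polynomial.X ^ e * (Polynomial.X ^ (v - e) * Phi n G)
        = Polynomial.X ^ e * Polynomial.C G := by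
      rw [← mul_assoc, ← pow_add]
      have : e + (v - e) = v := by omega
      rw [this, hkey]
      ring
    have h4 := mul_left_cancel₀ (pow_ne_zero e (Polynomial.X_ne_zero (R := Rn n))) h3
    have h5 := congrArg (fun z => Polynomial.coeff z 0) h4
    simp only [Polynomial.mul_coeff_zero, Polynomial.coeff_X_pow, Polynomial.coeff_C_zero] at h5
    rw [if_neg (by omega)] at h5
    rw [zero_mul] at h5
    exact h5.symm
  · intro hle
    have h3 : Phi n G * Polynomial.X ^ v
        = Polynomial.C G * Polynomial.X ^ (e - v) * Polynomial.X ^ v := by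
      rw [mul_assoc, ← pow_add]
      have : e - v + v = e := by omega
      rw [this, ← hkey]
      ring
    exact mul_right_cancel₀ (pow_ne_zero v (Polynomial.X_ne_zero (R := Rn n))) h3

lemma sb_X' (c d x : Fin n) : sb c d (X x) = X (if x = c then d else x) := by
  simp only [sb, aeval_X, apply_ite X]

lemma sb_D_ne_zero {c d : Fin n} (hcd : c ≠ d) {S : Finset (Fin n)}
    (hS : c ∈ S ↔ d ∈ S) : sb c d (D S) ≠ 0 := by
  rw [D, map_prod]
  refine Finset.prod_ne_zero_iff.mpr fun a ha => ?_
  rw [map_prod]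
  refine Finset.prod_ne_zero_iff.mpr fun b hb => ?_
  rw [Finset.mem_sdiff] at hb
  have hbS := hb.2
  rw [map_sub, sb_X', sb_X']
  apply X_sub_X_ne_zero
  by_cases hac : a = c
  · rw [if_pos hac]
    have hdS : d ∈ S := hS.mp (hac ▸ ha)
    by_cases hbc : b = c
    · have hab : a = b := hac.trans hbc.symm
      exact absurd (hab ▸ ha) hbS
    · rw [if_neg hbc]
      intro h; exact hbS (h ▸ hdS)
  · rw [if_neg hac]
    by_cases hbc : b = c
    · subst hbc
      rw [if_pos rfl]
      have hdS : d ∉ S := fun h => hbS (hS.mpr h)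
      intro h; exact hdS (h ▸ ha)
    · rw [if_neg hbc]
      intro h; exact hbS (h ▸ ha)

lemma mem_image_perm (e : Equiv.Perm (Fin n)) (S : Finset (Fin n)) (x : Fin n) :
    x ∈ S.image e ↔ e.symm x ∈ S := by
  rw [Finset.mem_image]
  constructor
  · rintro ⟨y, hy, rfl⟩; simpa using hy
  · intro h; exact ⟨e.symm x, h, by simp⟩

/-- the global numerator -/
def Nf (n k : ℕ) (iv : Fin k → ℕ) : Rn n :=
  ∑ S ∈ Finset.powersetCard k (Finset.univ : Finset (Fin n)), P k iv S * Q S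

lemma X_sub_dvd_V {c d : Fin n} (hcd : c < d) : (X d - X c : Rn n) ∣ V n := by
  have hm : ((c, d) : Fin n × Fin n) ∈ pairs n := by
    rw [pairs, Finset.mem_filter, Finset.mem_product]
    exact ⟨⟨Finset.mem_univ _, Finset.mem_univ _⟩, hcd⟩
  have h := Finset.dvd_prod_of_mem (fun p : Fin n × Fin n => (X p.2 - X p.1 : Rn n)) hm
  rw [V]
  exact h

lemma sb_N_zero (k : ℕ) (iv : Fin k → ℕ) {c d : Fin n} (hcd : c < d) :
    sb c d (Nf n k iv) = 0 := by
  classical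
  have hne : c ≠ d := ne_of_lt hcd
  rw [Nf, map_sum]
  rw [← Finset.sum_filter_add_sum_filter_not
    (Finset.powersetCard k (Finset.univ : Finset (Fin n))) (fun S => (c ∈ S ↔ d ∈ S))]
  have h1 : ∑ S ∈ (Finset.powersetCard k (Finset.univ : Finset (Fin n))).filter
      (fun S => (c ∈ S ↔ d ∈ S)), sb c d (P k iv S * Q S) = 0 := by
    refine Finset.sum_eq_zero fun S hS => ?_
    rw [Finset.mem_filter] at hS
    have hprime := prime_X_sub_X c d hne
    have hdvdV : (X d - X c : Rn n) ∣ D S * Q S := by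
      rw [D_mul_Q S]; exact X_sub_dvd_V hcd
    have hnd : ¬ (X d - X c : Rn n) ∣ D S := fun h =>
      sb_D_ne_zero hne hS.2 ((sb_eq_zero_iff c d hne (D S)).mpr h)
    have hQ : (X d - X c : Rn n) ∣ Q S := (hprime.2.2 _ _ hdvdV).resolve_left hnd
    rw [map_mul, (sb_eq_zero_iff c d hne (Q S)).mpr hQ, mul_zero]
  have h2 : ∑ S ∈ (Finset.powersetCard k (Finset.univ : Finset (Fin n))).filter
      (fun S => ¬ (c ∈ S ↔ d ∈ S)), sb c d (P k iv S * Q S) = 0 := by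
    refine Finset.sum_involution (fun S _ => S.image (Equiv.swap c d)) ?_ ?_ ?_ ?_
    · intro S hS
      have hP : sb c d (P k iv (S.image (Equiv.swap c d))) = sb c d (P k iv S) := by
        rw [← rename_P, sb_rename_swap hne]
      have hQ : sb c d (Q (S.image (Equiv.swap c d))) = - sb c d (Q S) := by
        have hq := rename_Q_swap hne S
        have : Q (S.image (Equiv.swap c d)) = - rename (Equiv.swap c d) (Q S) := by
          rw [hq, neg_neg]
        rw [this, map_neg, sb_rename_swap hne]
      rw [map_mul, map_mul, hP, hQ]
      ring
    · intro S hS _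
      rw [Finset.mem_filter] at hS
      intro heq
      apply hS.2
      have hc := mem_image_perm (Equiv.swap c d) S c
      rw [heq] at hc
      have hd := mem_image_perm (Equiv.swap c d) S d
      rw [heq] at hd
      simp only [Equiv.symm_swap, Equiv.swap_apply_left, Equiv.swap_apply_right] at hc hd
      exact hc
    · intro S hS
      rw [Finset.mem_filter] at hS ⊢
      constructor
      · rw [Finset.mem_powersetCard_univ]
        rw [Finset.mem_powersetCard_univ] at hS
        rw [Finset.card_image_of_injective _ (Equiv.injective _)]
        exact hS.1
      · have hc := mem_image_perm (Equiv.swap c d) S c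
        have hd := mem_image_perm (Equiv.swap c d) S d
        simp only [Equiv.symm_swap, Equiv.swap_apply_left, Equiv.swap_apply_right] at hc hd
        rw [hc, hd]
        tauto
    · intro S hS
      rw [Finset.image_image]
      have : ((Equiv.swap c d : Fin n → Fin n) ∘ (Equiv.swap c d : Fin n → Fin n)) = id := by
        funext x
        simp [Equiv.swap_apply_self]
      rw [this, Finset.image_id]
  rw [h1, h2, add_zero]

lemma prod_primes_dvd' {ι : Type*} (s : Finset ι) (f : ι → Rn n)
    (hp : ∀ x ∈ s, Prime (f x))
    (hnd : ∀ x ∈ s, ∀ y ∈ s, x ≠ y → ¬ f x ∣ f y) :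
    ∀ N : Rn n, (∀ x ∈ s, f x ∣ N) → (∏ x ∈ s, f x) ∣ N := by
  classical
  induction s using Finset.cons_induction with
  | empty => intro N _; simp
  | cons a s ha ih =>
      intro N hN
      obtain ⟨M, hM⟩ := hN a (Finset.mem_cons_self a s)
      rw [Finset.prod_cons, hM]
      refine mul_dvd_mul_left _ (ih (fun x hx => hp x (Finset.mem_cons_of_mem hx))
        (fun x hx y hy hxy => hnd x (Finset.mem_cons_of_mem hx) y
          (Finset.mem_cons_of_mem hy) hxy) M fun x hx => ?_)
      have hdvd : f x ∣ f a * M := hM ▸ hN x (Finset.mem_cons_of_mem hx)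
      have hx' := hp x (Finset.mem_cons_of_mem hx)
      refine (hx'.2.2 _ _ hdvd).resolve_left ?_
      refine hnd x (Finset.mem_cons_of_mem hx) a (Finset.mem_cons_self a s) ?_
      rintro rfl
      exact ha hx

lemma V_dvd_N (k : ℕ) (iv : Fin k → ℕ) : V n ∣ Nf n k iv := by
  rw [V]
  refine prod_primes_dvd' (pairs n) _ ?_ ?_ (Nf n k iv) ?_
  · rintro ⟨a, b⟩ hab
    rw [pairs, Finset.mem_filter] at hab
    exact prime_X_sub_X a b (ne_of_lt hab.2)
  · rintro ⟨a, b⟩ hab ⟨a', b'⟩ hab' hne hdvd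
    rw [pairs, Finset.mem_filter] at hab hab'
    have hab2 := hab.2
    have hab'2 := hab'.2
    simp only at hab2 hab'2
    have h1 : sb a b (X b' - X a' : Rn n) = 0 :=
      (sb_eq_zero_iff a b (ne_of_lt hab2) _).mpr hdvd
    rw [map_sub, sb_X', sb_X'] at h1
    have h2 : (if b' = a then b else b') = (if a' = a then b else a') := by
      by_contra hne2
      exact X_sub_X_ne_zero (Ne.symm hne2) h1
    by_cases ha'a : a' = a
    · rw [if_pos ha'a] at h2
      have hb'a : b' ≠ a := fun h => absurd (h ▸ hab'2) (by rw [ha'a]; exact lt_irrefl a |> fun _ => by omega)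
      rw [if_neg hb'a] at h2
      exact hne (by rw [Prod.ext_iff]; exact ⟨ha'a.symm, h2.symm⟩)
    · rw [if_neg ha'a] at h2
      by_cases hb'a : b' = a
      · rw [if_pos hb'a] at h2
        -- a' < b' = a < b = a', contradiction
        have : a' < a' := lt_trans (hb'a ▸ hab'2) (h2 ▸ hab2)
        exact absurd this (lt_irrefl _)
      · rw [if_neg hb'a] at h2
        exact absurd (h2 ▸ hab'2) (lt_irrefl _)
  · rintro ⟨c, d⟩ hcd
    rw [pairs, Finset.mem_filter] at hcd
    rw [← sb_eq_zero_iff c d (ne_of_lt hcd.2)]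
    exact sb_N_zero k iv hcd.2

lemma iota_ne_zero {p : Rn n} (hp : p ≠ 0) :
    algebraMap (Rn n) (FractionRing (Rn n)) p ≠ 0 := by
  have hinj := IsFractionRing.injective (Rn n) (FractionRing (Rn n))
  exact (map_ne_zero_iff _ hinj).mpr hp

end

end ChernAux

/-- if the cohomological degree `Σ_l l·i_l` of the characteristic monomial
is less than `k(n−k)` then the localization sum vanishes, and if it equals `k(n−k)` then
the sum is a constant, i.e. the image of a rational number in the fraction field. -/
theorem equivariant_chern_number_degree_cases (n k : ℕ) (hk : k ≤ n) (i : Fin k → ℕ) :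
    ((∑ l : Fin k, (l.1 + 1) * i l) < k * (n - k) → chernLocSum n k i = 0) ∧
    ((∑ l : Fin k, (l.1 + 1) * i l) = k * (n - k) →
      ∃ q : ℚ, chernLocSum n k i
        = algebraMap (MvPolynomial (Fin n) ℚ) (FractionRing (MvPolynomial (Fin n) ℚ))
            (C q)) := by
  classical
  obtain ⟨G, hG⟩ := ChernAux.V_dvd_N (n := n) k i
  have hsum : chernLocSum n k i
      = algebraMap (MvPolynomial (Fin n) ℚ) (FractionRing (MvPolynomial (Fin n) ℚ)) G := by
    have hstep : chernLocSum n k i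
        = ∑ S ∈ Finset.powersetCard k (Finset.univ : Finset (Fin n)),
          (algebraMap (ChernAux.Rn n) (FractionRing (ChernAux.Rn n)) (ChernAux.P k i S)) /
          (algebraMap (ChernAux.Rn n) (FractionRing (ChernAux.Rn n)) (ChernAux.D S)) := rfl
    rw [hstep]
    have hterm : ∀ S ∈ Finset.powersetCard k (Finset.univ : Finset (Fin n)),
        (algebraMap (ChernAux.Rn n) (FractionRing (ChernAux.Rn n)) (ChernAux.P k i S)) /
        (algebraMap (ChernAux.Rn n) (FractionRing (ChernAux.Rn n)) (ChernAux.D S))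
        = (algebraMap (ChernAux.Rn n) (FractionRing (ChernAux.Rn n))
            (ChernAux.P k i S * ChernAux.Q S)) /
          (algebraMap (ChernAux.Rn n) (FractionRing (ChernAux.Rn n)) (ChernAux.V n)) := by
      intro S _
      rw [div_eq_div_iff (ChernAux.iota_ne_zero (ChernAux.D_ne_zero S))
        (ChernAux.iota_ne_zero ChernAux.V_ne_zero)]
      rw [← map_mul, ← map_mul]
      congr 1
      rw [← ChernAux.D_mul_Q S]
      ring
    rw [Finset.sum_congr rfl hterm, ← Finset.sum_div, ← map_sum]
    rw [show ∑ S ∈ Finset.powersetCard k (Finset.univ : Finset (Fin n)),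
        ChernAux.P k i S * ChernAux.Q S = ChernAux.Nf n k i from rfl]
    rw [hG, map_mul]
    exact mul_div_cancel_left₀ _ (ChernAux.iota_ne_zero ChernAux.V_ne_zero)
  have hHomV := ChernAux.isHom_V (n := n)
  have hDdeg : ∀ S : Finset (Fin n), S.card = k → ChernAux.IsHom (k * (n - k)) (ChernAux.D S) := by
    intro S hc
    have h := ChernAux.isHom_D S
    rw [Finset.card_sdiff_of_subset (Finset.subset_univ S), Finset.card_univ, Fintype.card_fin, hc] at h
    exact h
  obtain ⟨S₀, hS₀sub, hS₀card⟩ := Finset.exists_subset_card_eq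
    (show k ≤ (Finset.univ : Finset (Fin n)).card by simpa using hk)
  have hvw : k * (n - k) ≤ (ChernAux.pairs n).card := by
    by_contra hlt
    push_neg at hlt
    have hVDQ : ChernAux.IsHom ((ChernAux.pairs n).card) (ChernAux.D S₀ * ChernAux.Q S₀) := by
      rw [ChernAux.D_mul_Q]; exact hHomV
    exact ChernAux.Q_ne_zero S₀
      ((ChernAux.hom_quot (hDdeg S₀ hS₀card) (ChernAux.D_ne_zero S₀) hVDQ).1 hlt)
  have hQdeg : ∀ S : Finset (Fin n), S.card = k →
      ChernAux.IsHom ((ChernAux.pairs n).card - k * (n - k)) (ChernAux.Q S) := by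
    intro S hc
    refine (ChernAux.hom_quot (hDdeg S hc) (ChernAux.D_ne_zero S) ?_).2 hvw
    rw [ChernAux.D_mul_Q]; exact hHomV
  have hNdeg : ChernAux.IsHom ((∑ l : Fin k, (l.1 + 1) * i l)
      + ((ChernAux.pairs n).card - k * (n - k))) (ChernAux.Nf n k i) := by
    refine ChernAux.isHom_sum _ _ _ fun S hS => ?_
    rw [Finset.mem_powersetCard_univ] at hS
    exact (ChernAux.isHom_P k i S).mul (hQdeg S hS)
  rw [hG] at hNdeg
  constructor
  · intro hdlt
    have hzero := (ChernAux.hom_quot hHomV ChernAux.V_ne_zero hNdeg).1 (by omega)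
    rw [hsum, hzero, map_zero]
  · intro hdeq
    have hG0 : ChernAux.IsHom 0 G := by
      have h := (ChernAux.hom_quot hHomV ChernAux.V_ne_zero hNdeg).2 (by omega)
      have h0 : (∑ l : Fin k, (l.1 + 1) * i l) + ((ChernAux.pairs n).card - k * (n - k))
          - (ChernAux.pairs n).card = 0 := by omega
      rwa [h0] at h
    obtain ⟨q, hq⟩ := ChernAux.isHom_zero_struct hG0
    exact ⟨q, by rw [hsum, hq]⟩
end
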